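/- arXiv:1507.04615 — 6 statements merged into one kernel-verified Lean document; each statement's English description precedes it below -/
import Mathlib

section
/- Let H be a complex Hilbert space, V a balanced set of unit vectors separating points of H, K the norm-closed convex hull in B(H)_* of {ω_{ξ,η} : ξ, η ∈ V}, p a nonzero orthogonal projection on H, and λ ≥ 1. Set V_{p,λ} := (λpV) ∩ S₁(H) and K_{p,λ} := norm-closed convex hull of {ω_{ξ,η} : ξ, η ∈ V_{p,λ}} in B(pH)_*. If V_{p,λ} separates points of pH, then for every x ∈ B(pH) (identified with pB(H)p ⊂ B(H)) one has ‖x‖_{K_{p,λ}} ≤ λ² · ‖x‖_K. -/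
noncomputable section

open scoped InnerProductSpace ENNReal Pointwise

/-- The vector functional `ω_{ξ,η}` on `B(H)` given by `x ↦ ⟨xξ, η⟩`
(linear in `x`; in Mathlib's convention this is `⟪η, x ξ⟫_ℂ`). -/
def omegaFunctional {H : Type*} [NormedAddCommGroup H] [InnerProductSpace ℂ H]
    (ξ η : H) : (H →L[ℂ] H) →L[ℂ] ℂ :=
  (innerSL ℂ η).comp (ContinuousLinearMap.apply ℂ H ξ)

/-- A continuous linear functional on `B(H)` is *normal* if it lies in the norm closure of the
linear span of the vector functionals (this is the predual `B(H)_*`, i.e. the trace-class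
induced functionals). -/
def IsNormalFunctional {H : Type*} [NormedAddCommGroup H] [InnerProductSpace ℂ H]
    (ψ : (H →L[ℂ] H) →L[ℂ] ℂ) : Prop :=
  ψ ∈ closure (Submodule.span ℂ {φ : (H →L[ℂ] H) →L[ℂ] ℂ | ∃ ξ η : H, φ = omegaFunctional ξ η} :
    Set ((H →L[ℂ] H) →L[ℂ] ℂ))

/-- A *normal state* on `B(H)`: a positive normal functional of norm one. -/
def IsNormalState {H : Type*} [NormedAddCommGroup H] [InnerProductSpace ℂ H] [CompleteSpace H]
    (φ : (H →L[ℂ] H) →L[ℂ] ℂ) : Prop :=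
  IsNormalFunctional φ ∧ ‖φ‖ = 1 ∧
    ∀ x : H →L[ℂ] H, x.IsPositive → 0 ≤ (φ x).re ∧ (φ x).im = 0

/-- `‖x‖_K := sup {|ψ(x)| : ψ ∈ K}`. -/
def normK {H : Type*} [NormedAddCommGroup H] [InnerProductSpace ℂ H]
    (K : Set ((H →L[ℂ] H) →L[ℂ] ℂ)) (x : H →L[ℂ] H) : ℝ :=
  sSup ((fun ψ : (H →L[ℂ] H) →L[ℂ] ℂ => ‖ψ x‖) '' K)

/-- The Minkowski functional `q_K(ψ) := inf {α ≥ 0 : ψ ∈ αK}`, with value `∞` if no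
such `α` exists. -/
def qK {H : Type*} [NormedAddCommGroup H] [InnerProductSpace ℂ H]
    (K : Set ((H →L[ℂ] H) →L[ℂ] ℂ)) (ψ : (H →L[ℂ] H) →L[ℂ] ℂ) : ℝ≥0∞ :=
  sInf {c : ℝ≥0∞ | ∃ r : ℝ, 0 ≤ r ∧ c = ENNReal.ofReal r ∧ ψ ∈ r • K}


set_option maxHeartbeats 1000000 in
/-- Let `p ≠ 0` be an orthogonal projection, `l ≥ 1`, and
`V_{p,l} := (l·pV) ∩ S₁(H)`, `K_{p,l}` the norm-closed convex hull of the corresponding vector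
functionals. If `V_{p,l}` separates points of `pH` then, identifying `B(pH)` with `pB(H)p`,
`‖x‖_{K_{p,l}} ≤ l² · ‖x‖_K` for every `x ∈ B(pH)`. -/
theorem stmt4 {H : Type*} [NormedAddCommGroup H] [InnerProductSpace ℂ H] [CompleteSpace H]
    (V : Set H)
    (hunit : ∀ ξ ∈ V, ‖ξ‖ = 1)
    (hbal : ∀ ξ ∈ V, ∀ c : ℂ, ‖c‖ = 1 → c • ξ ∈ V)
    (hsep : ∀ ξ : H, (∀ η ∈ V, ⟪ξ, η⟫_ℂ = 0) → ξ = 0)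
    (K : Set ((H →L[ℂ] H) →L[ℂ] ℂ))
    (hK : K = closure (convexHull ℝ
      {φ : (H →L[ℂ] H) →L[ℂ] ℂ | ∃ ξ ∈ V, ∃ η ∈ V, φ = omegaFunctional ξ η}))
    (p : H →L[ℂ] H) (hp_idem : IsIdempotentElem p) (hp_sa : IsSelfAdjoint p) (hp_ne : p ≠ 0)
    (l : ℝ) (hl : 1 ≤ l)
    (Vp : Set H) (hVp : Vp = {ζ : H | (∃ ξ ∈ V, ζ = l • p ξ) ∧ ‖ζ‖ = 1})
    (Kp : Set ((H →L[ℂ] H) →L[ℂ] ℂ))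
    (hKp : Kp = closure (convexHull ℝ
      {φ : (H →L[ℂ] H) →L[ℂ] ℂ | ∃ ξ ∈ Vp, ∃ η ∈ Vp, φ = omegaFunctional ξ η}))
    (hVpsep : ∀ ξ : H, p ξ = ξ → (∀ η ∈ Vp, ⟪ξ, η⟫_ℂ = 0) → ξ = 0) :
    ∀ x : H →L[ℂ] H, p ∘L x ∘L p = x → normK Kp x ≤ l ^ 2 * normK K x := by
  intro x hx
  have hsym := hp_sa.isSymmetric
  have homega : ∀ ξ η : H, omegaFunctional ξ η x = ⟪η, x ξ⟫_ℂ := fun ξ η => rfl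
  -- convexity and closedness of sublevel sets of ψ ↦ ‖ψ x‖
  have hSconv : ∀ C : ℝ, Convex ℝ {ψ : (H →L[ℂ] H) →L[ℂ] ℂ | ‖ψ x‖ ≤ C} := by
    intro C ψ₁ h₁ ψ₂ h₂ a b ha hb hab
    simp only [Set.mem_setOf_eq] at *
    calc ‖(a • ψ₁ + b • ψ₂) x‖ = ‖a • ψ₁ x + b • ψ₂ x‖ := by
          simp [ContinuousLinearMap.add_apply, ContinuousLinearMap.smul_apply]
      _ ≤ ‖a • ψ₁ x‖ + ‖b • ψ₂ x‖ := norm_add_le _ _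
      _ = a * ‖ψ₁ x‖ + b * ‖ψ₂ x‖ := by
          rw [norm_smul, norm_smul, Real.norm_of_nonneg ha, Real.norm_of_nonneg hb]
      _ ≤ a * C + b * C :=
          add_le_add (mul_le_mul_of_nonneg_left h₁ ha) (mul_le_mul_of_nonneg_left h₂ hb)
      _ = C := by rw [← add_mul, hab, one_mul]
  have hScl : ∀ C : ℝ, IsClosed {ψ : (H →L[ℂ] H) →L[ℂ] ℂ | ‖ψ x‖ ≤ C} := by
    intro C
    exact isClosed_le ((ContinuousLinearMap.apply ℂ ℂ x).continuous.norm) continuous_const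
  -- everything in K is bounded by ‖x‖ at x
  have hKbdd : ∀ ψ ∈ K, ‖ψ x‖ ≤ ‖x‖ := by
    intro ψ hψ
    rw [hK] at hψ
    refine closure_minimal (convexHull_min ?_ (hSconv ‖x‖)) (hScl ‖x‖) hψ
    rintro φ ⟨ξ, hξ, η, hη, rfl⟩
    simp only [Set.mem_setOf_eq, homega]
    calc ‖⟪η, x ξ⟫_ℂ‖ ≤ ‖η‖ * ‖x ξ‖ := norm_inner_le_norm _ _
      _ ≤ ‖η‖ * (‖x‖ * ‖ξ‖) := by gcongr; exact x.le_opNorm ξ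
      _ = ‖x‖ := by rw [hunit ξ hξ, hunit η hη]; ring
  have hbdd : BddAbove ((fun ψ : (H →L[ℂ] H) →L[ℂ] ℂ => ‖ψ x‖) '' K) := by
    refine ⟨‖x‖, ?_⟩
    rintro y ⟨ψ, hψ, rfl⟩
    exact hKbdd ψ hψ
  -- V is nonempty, hence normK K x ≥ 0
  have hVne : V.Nonempty := by
    rcases Set.eq_empty_or_nonempty V with h | h
    · exfalso
      apply hp_ne
      have hz : ∀ ξ : H, ξ = 0 := by
        intro ξ
        exact hsep ξ (fun η hη => absurd hη (by simp [h]))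
      ext ξ
      simp [hz (p ξ)]
    · exact h
  obtain ⟨ξ₀, hξ₀⟩ := hVne
  have homem : omegaFunctional ξ₀ ξ₀ ∈ K := by
    rw [hK]
    exact subset_closure (subset_convexHull ℝ _ ⟨ξ₀, hξ₀, ξ₀, hξ₀, rfl⟩)
  have hnK : 0 ≤ normK K x := by
    refine le_trans (norm_nonneg (omegaFunctional ξ₀ ξ₀ x)) ?_
    exact le_csSup hbdd ⟨_, homem, rfl⟩
  -- each ψ ∈ K contributes at most normK K x
  have hKle : ∀ ψ ∈ K, ‖ψ x‖ ≤ normK K x := fun ψ hψ => le_csSup hbdd ⟨ψ, hψ, rfl⟩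
  -- key: Kp ⊆ {ψ | ‖ψ x‖ ≤ l ^ 2 * normK K x}
  have hkey : Kp ⊆ {ψ : (H →L[ℂ] H) →L[ℂ] ℂ | ‖ψ x‖ ≤ l ^ 2 * normK K x} := by
    rw [hKp]
    refine closure_minimal (convexHull_min ?_ (hSconv _)) (hScl _)
    rintro φ ⟨ζ₁, hζ₁, ζ₂, hζ₂, rfl⟩
    rw [hVp] at hζ₁ hζ₂
    obtain ⟨⟨ξ₁, hξ₁, rfl⟩, -⟩ := hζ₁
    obtain ⟨⟨ξ₂, hξ₂, rfl⟩, -⟩ := hζ₂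
    simp only [Set.mem_setOf_eq, homega]
    have hxp : ∀ ξ : H, p (x (p ξ)) = x ξ := by
      intro ξ
      have := congrArg (fun y : H →L[ℂ] H => y ξ) hx
      simpa using this
    have hval : ⟪(l • p ξ₂ : H), x (l • p ξ₁)⟫_ℂ = (l : ℂ) ^ 2 * ⟪ξ₂, x ξ₁⟫_ℂ := by
      have h2 : ⟪(p ξ₂ : H), x (p ξ₁)⟫_ℂ = ⟪ξ₂, x ξ₁⟫_ℂ := by
        have h3 := hsym ξ₂ (x (p ξ₁))
        simpa [hxp ξ₁] using h3
      rw [RCLike.real_smul_eq_coe_smul (K := ℂ) l, RCLike.real_smul_eq_coe_smul (K := ℂ) l,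
        map_smul, inner_smul_left, inner_smul_right, h2, RCLike.conj_ofReal]
      exact (sq (l:ℂ)) ▸ (mul_assoc _ _ _).symm
    rw [hval, norm_mul]
    have hω : omegaFunctional ξ₁ ξ₂ ∈ K := by
      rw [hK]
      exact subset_closure (subset_convexHull ℝ _ ⟨ξ₁, hξ₁, ξ₂, hξ₂, rfl⟩)
    have h1 : ‖⟪ξ₂, x ξ₁⟫_ℂ‖ ≤ normK K x := hKle _ hω
    have h2 : ‖((l : ℂ)) ^ 2‖ = l ^ 2 := by
      rw [norm_pow, Complex.norm_real, Real.norm_of_nonneg (le_trans zero_le_one hl)]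
    rw [h2]
    exact mul_le_mul_of_nonneg_left h1 (by positivity)
  -- conclude
  refine Real.sSup_le ?_ (by positivity)
  rintro y ⟨ψ, hψ, rfl⟩
  exact hkey hψ
end
end

section
/- Let H be a complex Hilbert space, V a balanced set of unit vectors separating points of H, K the norm-closed convex hull in B(H)_* of {ω_{ξ,η} : ξ, η ∈ V}, p a nonzero orthogonal projection and λ ≥ 1. Suppose p is compatible with (V, λ), i.e. for every ξ ∈ V with pξ ≠ 0 the normalized vector pξ/‖pξ‖ lies in V_{p,λ} := (λpV) ∩ S₁(H). Then V_{p,λ} separates points of pH, and with μ := sup{r ≥ 1 : r·pV ⊂ B₁(H)} one has ‖x‖_{K_{p,λ}} ≥ μ² · ‖x‖_K for every x ∈ B(pH) (identified with pB(H)p). -/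
noncomputable section

open scoped InnerProductSpace ENNReal Pointwise

section Aux

variable {H : Type*} [NormedAddCommGroup H] [InnerProductSpace ℂ H] [CompleteSpace H]

lemma omega_apply' (ξ η : H) (x : H →L[ℂ] H) :
    omegaFunctional ξ η x = ⟪η, x ξ⟫_ℂ := rfl

lemma omega_norm_le' (ξ η : H) : ‖omegaFunctional ξ η‖ ≤ ‖ξ‖ * ‖η‖ := by
  refine ContinuousLinearMap.opNorm_le_bound _ (by positivity) fun x => ?_
  rw [omega_apply']
  calc ‖⟪η, x ξ⟫_ℂ‖ ≤ ‖η‖ * ‖x ξ‖ := norm_inner_le_norm _ _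
    _ ≤ ‖η‖ * (‖x‖ * ‖ξ‖) := by
        have := x.le_opNorm ξ
        have h0 : (0:ℝ) ≤ ‖η‖ := norm_nonneg _
        nlinarith
    _ = ‖ξ‖ * ‖η‖ * ‖x‖ := by ring

lemma proj_norm_le' (p : H →L[ℂ] H) (hp_idem : IsIdempotentElem p) (hp_sa : IsSelfAdjoint p)
    (ξ : H) : ‖p ξ‖ ≤ ‖ξ‖ := by
  have hpp : p (p ξ) = p ξ := DFunLike.congr_fun hp_idem ξ
  have h1 : ⟪p ξ, p ξ⟫_ℂ = ⟪ξ, p ξ⟫_ℂ := by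
    have h0 : ⟪p ξ, p ξ⟫_ℂ = ⟪ξ, p (p ξ)⟫_ℂ := hp_sa.isSymmetric ξ (p ξ)
    rw [h0, hpp]
  have h2 : ‖p ξ‖ ^ 2 ≤ ‖ξ‖ * ‖p ξ‖ := by
    have h3 : ‖p ξ‖ ^ 2 = ‖⟪ξ, p ξ⟫_ℂ‖ := by
      rw [← h1, inner_self_eq_norm_sq_to_K]
      rw [norm_pow]
      simp
    rw [h3]
    exact norm_inner_le_norm _ _
  rcases eq_or_lt_of_le (norm_nonneg (p ξ)) with h | h
  · rw [← h]; exact norm_nonneg ξ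
  · nlinarith

lemma inner_real_smul_right' (r : ℝ) (v w : H) : ⟪v, r • w⟫_ℂ = (r : ℂ) * ⟪v, w⟫_ℂ := by
  rw [show r • w = (Complex.ofReal r) • w from rfl, inner_smul_right]

lemma inner_real_smul_left' (r : ℝ) (v w : H) : ⟪r • v, w⟫_ℂ = (r : ℂ) * ⟪v, w⟫_ℂ := by
  rw [show r • v = (Complex.ofReal r) • v from rfl, inner_smul_left, Complex.conj_ofReal]

end Aux

/-- Suppose `p` is compatible with `(V, l)`, i.e. `pξ/‖pξ‖ ∈ V_{p,l}` for every
`ξ ∈ V` with `pξ ≠ 0`. Then `V_{p,l}` separates points of `pH`, and with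
`μ := sup {r ≥ 1 : r·pV ⊂ B₁(H)}` one has `‖x‖_{K_{p,l}} ≥ μ² · ‖x‖_K` for all `x ∈ pB(H)p`. -/
theorem stmt6 {H : Type*} [NormedAddCommGroup H] [InnerProductSpace ℂ H] [CompleteSpace H]
    (V : Set H)
    (hunit : ∀ ξ ∈ V, ‖ξ‖ = 1)
    (hbal : ∀ ξ ∈ V, ∀ c : ℂ, ‖c‖ = 1 → c • ξ ∈ V)
    (hsep : ∀ ξ : H, (∀ η ∈ V, ⟪ξ, η⟫_ℂ = 0) → ξ = 0)
    (K : Set ((H →L[ℂ] H) →L[ℂ] ℂ))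
    (hK : K = closure (convexHull ℝ
      {φ : (H →L[ℂ] H) →L[ℂ] ℂ | ∃ ξ ∈ V, ∃ η ∈ V, φ = omegaFunctional ξ η}))
    (p : H →L[ℂ] H) (hp_idem : IsIdempotentElem p) (hp_sa : IsSelfAdjoint p) (hp_ne : p ≠ 0)
    (l : ℝ) (hl : 1 ≤ l)
    (Vp : Set H) (hVp : Vp = {ζ : H | (∃ ξ ∈ V, ζ = l • p ξ) ∧ ‖ζ‖ = 1})
    (Kp : Set ((H →L[ℂ] H) →L[ℂ] ℂ))
    (hKp : Kp = closure (convexHull ℝ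
      {φ : (H →L[ℂ] H) →L[ℂ] ℂ | ∃ ξ ∈ Vp, ∃ η ∈ Vp, φ = omegaFunctional ξ η}))
    (hcompat : ∀ ξ ∈ V, p ξ ≠ 0 → ‖p ξ‖⁻¹ • p ξ ∈ Vp)
    (μ : ℝ) (hμ : μ = sSup {r : ℝ | 1 ≤ r ∧ ∀ ξ ∈ V, ‖r • p ξ‖ ≤ 1}) :
    (∀ ξ : H, p ξ = ξ → (∀ η ∈ Vp, ⟪ξ, η⟫_ℂ = 0) → ξ = 0) ∧
    (∀ x : H →L[ℂ] H, p ∘L x ∘L p = x → μ ^ 2 * normK K x ≤ normK Kp x) := by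
  subst hK hKp hVp hμ
  have hsym : ∀ a b : H, ⟪p a, b⟫_ℂ = ⟪a, p b⟫_ℂ := fun a b => hp_sa.isSymmetric a b
  constructor
  · -- separation
    intro ξ hξ horth
    apply hsep
    intro η hη
    have h1 : ⟪ξ, η⟫_ℂ = ⟪ξ, p η⟫_ℂ := by
      calc ⟪ξ, η⟫_ℂ = ⟪p ξ, η⟫_ℂ := by rw [hξ]
        _ = ⟪ξ, p η⟫_ℂ := hsym ξ η
    by_cases hpη : p η = 0
    · rw [h1, hpη, inner_zero_right]
    · have hmem := hcompat η hη hpη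
      have h2 := horth _ hmem
      have h3 : ⟪ξ, (‖p η‖⁻¹ : ℝ) • p η⟫_ℂ = (Complex.ofReal ‖p η‖⁻¹) * ⟪ξ, p η⟫_ℂ :=
        inner_real_smul_right' _ _ _
      rw [h3] at h2
      have hne : (Complex.ofReal ‖p η‖⁻¹) ≠ 0 := by
        simp [norm_eq_zero, hpη]
      rw [h1]
      exact (mul_eq_zero.mp h2).resolve_left hne
  · -- norm inequality
    intro x hx
    have hxapp : ∀ v, x v = p (x (p v)) := fun v => (DFunLike.congr_fun hx v).symm
    -- find ξ₀ ∈ V with p ξ₀ ≠ 0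
    obtain ⟨ζ, hζ⟩ : ∃ ζ, p ζ ≠ 0 := by
      by_contra h
      push_neg at h
      exact hp_ne (ContinuousLinearMap.ext fun v => by rw [h v]; rfl)
    obtain ⟨ξ₀, hξ₀V, hξ₀⟩ : ∃ ξ₀ ∈ V, p ξ₀ ≠ 0 := by
      by_contra h
      push_neg at h
      refine hζ (hsep (p ζ) fun η hη => ?_)
      rw [hsym ζ η, h η hη, inner_zero_right]
    have hpξ₀pos : (0:ℝ) < ‖p ξ₀‖ := norm_pos_iff.mpr hξ₀
    set M : Set ℝ := {r : ℝ | 1 ≤ r ∧ ∀ ξ ∈ V, ‖r • p ξ‖ ≤ 1} with hM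
    have h1M : (1:ℝ) ∈ M := by
      refine ⟨le_refl 1, fun ξ hξ => ?_⟩
      rw [one_smul]
      rw [← hunit ξ hξ]
      exact proj_norm_le' p hp_idem hp_sa ξ
    have hMne : M.Nonempty := ⟨1, h1M⟩
    have hrle : ∀ r ∈ M, ∀ ξ ∈ V, p ξ ≠ 0 → r ≤ 1 / ‖p ξ‖ := by
      intro r hr ξ hξ hpξ
      have hpos : (0:ℝ) < ‖p ξ‖ := norm_pos_iff.mpr hpξ
      have h2 := hr.2 ξ hξ
      rw [norm_smul, Real.norm_of_nonneg (le_trans zero_le_one hr.1)] at h2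
      exact (le_div_iff₀ hpos).mpr h2
    have hMbdd : BddAbove M := ⟨1 / ‖p ξ₀‖, fun r hr => hrle r hr ξ₀ hξ₀V hξ₀⟩
    set μ := sSup M with hμdef
    have hμ1 : (1:ℝ) ≤ μ := le_csSup hMbdd h1M
    have hμpos : (0:ℝ) < μ := lt_of_lt_of_le one_pos hμ1
    have hμle : ∀ ξ ∈ V, p ξ ≠ 0 → μ ≤ 1 / ‖p ξ‖ := fun ξ hξ hpξ =>
      csSup_le hMne fun r hr => hrle r hr ξ hξ hpξ
    -- Kp facts
    set Gp : Set ((H →L[ℂ] H) →L[ℂ] ℂ) :=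
      {φ | ∃ ξ ∈ {ζ : H | (∃ ξ ∈ V, ζ = l • p ξ) ∧ ‖ζ‖ = 1},
        ∃ η ∈ {ζ : H | (∃ ξ ∈ V, ζ = l • p ξ) ∧ ‖ζ‖ = 1}, φ = omegaFunctional ξ η} with hGp
    set Kp := closure (convexHull ℝ Gp) with hKpdef
    have hGpKp : Gp ⊆ Kp := (subset_convexHull ℝ Gp).trans subset_closure
    have hKpball : Kp ⊆ Metric.closedBall 0 1 := by
      refine closure_minimal (convexHull_min ?_ (convex_closedBall _ _)) Metric.isClosed_closedBall
      rintro φ ⟨ξ, hξ, η, hη, rfl⟩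
      rw [Metric.mem_closedBall, dist_zero_right]
      calc ‖omegaFunctional ξ η‖ ≤ ‖ξ‖ * ‖η‖ := omega_norm_le' ξ η
        _ = 1 := by rw [hξ.2, hη.2, one_mul]
    have hbddKp : BddAbove ((fun ψ : (H →L[ℂ] H) →L[ℂ] ℂ => ‖ψ x‖) '' Kp) := by
      refine ⟨‖x‖, ?_⟩
      rintro - ⟨ψ, hψ, rfl⟩
      have hψ1 : ‖ψ‖ ≤ 1 := by
        have := hKpball hψ
        rwa [Metric.mem_closedBall, dist_zero_right] at this
      calc ‖ψ x‖ ≤ ‖ψ‖ * ‖x‖ := ψ.le_opNorm x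
        _ ≤ 1 * ‖x‖ := mul_le_mul_of_nonneg_right hψ1 (norm_nonneg x)
        _ = ‖x‖ := one_mul _
    have hKpgen : ∀ φ ∈ Gp, ‖φ x‖ ≤ normK Kp x := by
      intro φ hφ
      exact le_csSup hbddKp ⟨φ, hGpKp hφ, rfl⟩
    have hζ₀ := hcompat ξ₀ hξ₀V hξ₀
    have hφ₀ : omegaFunctional (‖p ξ₀‖⁻¹ • p ξ₀) (‖p ξ₀‖⁻¹ • p ξ₀) ∈ Gp :=
      ⟨_, hζ₀, _, hζ₀, rfl⟩
    have hnKp0 : 0 ≤ normK Kp x :=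
      le_trans (norm_nonneg _) (hKpgen _ hφ₀)
    -- key estimate for generators of K
    have hkey : ∀ ξ ∈ V, ∀ η ∈ V,
        μ ^ 2 * ‖omegaFunctional ξ η x‖ ≤ normK Kp x := by
      intro ξ hξ η hη
      by_cases hpξ : p ξ = 0
      · have hx0 : x ξ = 0 := by rw [hxapp ξ, hpξ, map_zero, map_zero]
        rw [omega_apply', hx0, inner_zero_right, norm_zero, mul_zero]
        exact hnKp0
      by_cases hpη : p η = 0
      · have hx0 : omegaFunctional ξ η x = 0 := by
          rw [omega_apply', hxapp ξ, ← hsym η (x (p ξ)), hpη, inner_zero_left]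
        rw [hx0, norm_zero, mul_zero]
        exact hnKp0
      have hζmem := hcompat ξ hξ hpξ
      have hθmem := hcompat η hη hpη
      have hpξpos : (0:ℝ) < ‖p ξ‖ := norm_pos_iff.mpr hpξ
      have hpηpos : (0:ℝ) < ‖p η‖ := norm_pos_iff.mpr hpη
      have hφ : omegaFunctional (‖p ξ‖⁻¹ • p ξ) (‖p η‖⁻¹ • p η) ∈ Gp :=
        ⟨_, hζmem, _, hθmem, rfl⟩
      have hval : omegaFunctional (‖p ξ‖⁻¹ • p ξ) (‖p η‖⁻¹ • p η) x
          = (Complex.ofReal ‖p ξ‖⁻¹) * (Complex.ofReal ‖p η‖⁻¹) * omegaFunctional ξ η x := by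
        rw [omega_apply', omega_apply']
        have hmid : ⟪p η, x (p ξ)⟫_ℂ = ⟪η, x ξ⟫_ℂ := by
          rw [hsym η (x (p ξ)), ← hxapp ξ]
        rw [show x ((‖p ξ‖⁻¹ : ℝ) • p ξ) = (‖p ξ‖⁻¹ : ℝ) • (x (p ξ)) from map_smul x _ _,
            inner_real_smul_left', inner_real_smul_right', hmid]
        ring
      have hnorm : ‖omegaFunctional (‖p ξ‖⁻¹ • p ξ) (‖p η‖⁻¹ • p η) x‖
          = ‖p ξ‖⁻¹ * ‖p η‖⁻¹ * ‖omegaFunctional ξ η x‖ := by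
        rw [hval, norm_mul, norm_mul, Complex.norm_real, Complex.norm_real,
            Real.norm_of_nonneg (by positivity), Real.norm_of_nonneg (by positivity)]
      have hμξ : μ ≤ ‖p ξ‖⁻¹ := by
        have := hμle ξ hξ hpξ; rwa [one_div] at this
      have hμη : μ ≤ ‖p η‖⁻¹ := by
        have := hμle η hη hpη; rwa [one_div] at this
      calc μ ^ 2 * ‖omegaFunctional ξ η x‖
          = μ * μ * ‖omegaFunctional ξ η x‖ := by ring
        _ ≤ ‖p ξ‖⁻¹ * ‖p η‖⁻¹ * ‖omegaFunctional ξ η x‖ := by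
            have h0 : (0:ℝ) ≤ ‖omegaFunctional ξ η x‖ := norm_nonneg _
            have h1 : (0:ℝ) ≤ μ := le_of_lt hμpos
            have h2 : μ * μ ≤ ‖p ξ‖⁻¹ * ‖p η‖⁻¹ :=
              mul_le_mul hμξ hμη h1 (le_of_lt (inv_pos.mpr hpξpos))
            exact mul_le_mul_of_nonneg_right h2 h0
        _ = ‖omegaFunctional (‖p ξ‖⁻¹ • p ξ) (‖p η‖⁻¹ • p η) x‖ := hnorm.symm
        _ ≤ normK Kp x := hKpgen _ hφ
    -- pass to all of K
    set C := normK Kp x / μ ^ 2 with hC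
    have hC0 : 0 ≤ C := div_nonneg hnKp0 (by positivity)
    have hSconv : Convex ℝ {ψ : (H →L[ℂ] H) →L[ℂ] ℂ | ‖ψ x‖ ≤ C} := by
      intro ψ hψ φ hφ a b ha hb hab
      simp only [Set.mem_setOf_eq] at hψ hφ ⊢
      have happ : (a • ψ + b • φ) x = a • ψ x + b • φ x := by
        simp [ContinuousLinearMap.add_apply, ContinuousLinearMap.smul_apply]
      rw [happ]
      calc ‖a • ψ x + b • φ x‖ ≤ ‖a • ψ x‖ + ‖b • φ x‖ := norm_add_le _ _
        _ = a * ‖ψ x‖ + b * ‖φ x‖ := by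
            rw [norm_smul, norm_smul, Real.norm_of_nonneg ha, Real.norm_of_nonneg hb]
        _ ≤ a * C + b * C := by
            gcongr
        _ = C := by rw [← add_mul, hab, one_mul]
    have hSclosed : IsClosed {ψ : (H →L[ℂ] H) →L[ℂ] ℂ | ‖ψ x‖ ≤ C} := by
      have hcont : Continuous fun ψ : (H →L[ℂ] H) →L[ℂ] ℂ => ‖ψ x‖ :=
        (ContinuousLinearMap.apply ℂ ℂ x).continuous.norm
      exact isClosed_le hcont continuous_const
    have hgen : {φ : (H →L[ℂ] H) →L[ℂ] ℂ | ∃ ξ ∈ V, ∃ η ∈ V, φ = omegaFunctional ξ η}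
        ⊆ {ψ : (H →L[ℂ] H) →L[ℂ] ℂ | ‖ψ x‖ ≤ C} := by
      rintro φ ⟨ξ, hξ, η, hη, rfl⟩
      have := hkey ξ hξ η hη
      rw [Set.mem_setOf_eq, hC, le_div_iff₀ (by positivity : (0:ℝ) < μ ^ 2)]
      linarith [hkey ξ hξ η hη]
    have hKsub : closure (convexHull ℝ
        {φ : (H →L[ℂ] H) →L[ℂ] ℂ | ∃ ξ ∈ V, ∃ η ∈ V, φ = omegaFunctional ξ η})
        ⊆ {ψ : (H →L[ℂ] H) →L[ℂ] ℂ | ‖ψ x‖ ≤ C} :=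
      closure_minimal (convexHull_min hgen hSconv) hSclosed
    have hnormK : normK (closure (convexHull ℝ
        {φ : (H →L[ℂ] H) →L[ℂ] ℂ | ∃ ξ ∈ V, ∃ η ∈ V, φ = omegaFunctional ξ η})) x ≤ C := by
      refine Real.sSup_le ?_ hC0
      rintro - ⟨ψ, hψ, rfl⟩
      exact hKsub hψ
    have heq : μ ^ 2 * C = normK Kp x := by
      rw [hC]
      field_simp
    have h2 := mul_le_mul_of_nonneg_left hnormK
      (le_of_lt (by positivity : (0:ℝ) < μ ^ 2))
    exact le_of_le_of_eq h2 heq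
end
end

section
/- Let H be a complex Hilbert space, V a balanced set of unit vectors separating points of H, K the norm-closed convex hull in B(H)_* of {ω_{ξ,η} : ξ, η ∈ V}, p a nonzero orthogonal projection and λ ≥ 1 such that p is compatible with (V, λ). With μ := sup{r ≥ 1 : r·pV ⊂ B₁(H)}, every normal functional ψ on B(pH) (viewed on B(H) via ψ(x) = ψ(pxp)) satisfies q_{K_{p,λ}}(ψ) ≤ (1/μ²) · q_K(ψ). -/
noncomputable section

open scoped InnerProductSpace ENNReal Pointwise

/-!
Compressing by `p`, i.e. precomposing with `x ↦ pxp`, fixes `ψ` and sends `ω_{ξ,η}` to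
`ω_{pξ,pη} = ‖pξ‖‖pη‖ ω_{ξ',η'}` with `ξ', η' ∈ V_{p,λ}` by compatibility. Since
`‖pξ‖, ‖pη‖ ≤ 1/μ` and `0 ∈ K_{p,λ}` (as `V_{p,λ}` is symmetric), this lies in
`μ⁻² K_{p,λ}`; by linearity and continuity the compression maps `K` into `μ⁻² K_{p,λ}`, so
`ψ ∈ rK` forces `ψ ∈ rμ⁻² K_{p,λ}`.
-/

open Set

section Scales

variable {α E : Type*} [NormedAddCommGroup E] [NormedSpace ℝ E]

lemma mul_norm_le_one_of_mem_scales {f : α → E} {s : Set α} {r : ℝ}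
    (hr : r ∈ {r : ℝ | 1 ≤ r ∧ ∀ x ∈ s, ‖r • f x‖ ≤ 1}) {x : α} (hx : x ∈ s) :
    r * ‖f x‖ ≤ 1 := by
  simpa [norm_smul, abs_of_nonneg (zero_le_one.trans hr.1)] using hr.2 x hx

lemma bddAbove_scales {f : α → E} {s : Set α} (h : ∃ x ∈ s, f x ≠ 0) :
    BddAbove {r : ℝ | 1 ≤ r ∧ ∀ x ∈ s, ‖r • f x‖ ≤ 1} := by
  obtain ⟨x, hx, hfx⟩ := h
  exact ⟨1 / ‖f x‖, fun r hr =>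
    (le_div_iff₀ (norm_pos_iff.2 hfx)).2 (mul_norm_le_one_of_mem_scales hr hx)⟩

lemma one_le_sSup_scales {f : α → E} {s : Set α} (h1 : ∀ x ∈ s, ‖f x‖ ≤ 1)
    (h : ∃ x ∈ s, f x ≠ 0) : 1 ≤ sSup {r : ℝ | 1 ≤ r ∧ ∀ x ∈ s, ‖r • f x‖ ≤ 1} :=
  le_csSup (bddAbove_scales h) ⟨le_rfl, by simpa using h1⟩

lemma sSup_scales_mul_norm_le_one {f : α → E} {s : Set α} (h1 : ∀ x ∈ s, ‖f x‖ ≤ 1)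
    {x : α} (hx : x ∈ s) : sSup {r : ℝ | 1 ≤ r ∧ ∀ x ∈ s, ‖r • f x‖ ≤ 1} * ‖f x‖ ≤ 1 := by
  rcases eq_or_ne (f x) 0 with hfx | hfx
  · simp [hfx]
  refine (le_div_iff₀ (norm_pos_iff.2 hfx)).1 (csSup_le ⟨1, le_rfl, by simpa using h1⟩ ?_)
  exact fun r hr => (le_div_iff₀ (norm_pos_iff.2 hfx)).2 (mul_norm_le_one_of_mem_scales hr hx)

end Scales

section Compression

variable {𝕜 E : Type*} [NontriviallyNormedField 𝕜] [NormedAddCommGroup E] [NormedSpace 𝕜 E]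

def compression (p : E →L[𝕜] E) :
    ((E →L[𝕜] E) →L[𝕜] 𝕜) →L[𝕜] ((E →L[𝕜] E) →L[𝕜] 𝕜) :=
  (ContinuousLinearMap.compL 𝕜 (E →L[𝕜] E) (E →L[𝕜] E) 𝕜).flip
    ((ContinuousLinearMap.compL 𝕜 E E E p).comp ((ContinuousLinearMap.compL 𝕜 E E E).flip p))

@[simp]
lemma compression_apply (p : E →L[𝕜] E) (φ : (E →L[𝕜] E) →L[𝕜] 𝕜) (x : E →L[𝕜] E) :
    compression p φ x = φ (p ∘L x ∘L p) :=
  rfl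

end Compression

section VectorFunctionals

variable {H : Type*} [NormedAddCommGroup H] [InnerProductSpace ℂ H]

@[simp]
lemma omegaFunctional_zero_left (η : H) : omegaFunctional 0 η = 0 := by
  ext x; simp [omegaFunctional]

@[simp]
lemma omegaFunctional_zero_right (ξ : H) : omegaFunctional ξ 0 = 0 := by
  ext x; simp [omegaFunctional]

@[simp]
lemma omegaFunctional_neg_left (ξ η : H) : omegaFunctional (-ξ) η = -omegaFunctional ξ η := by
  ext x; simp [omegaFunctional]

lemma omegaFunctional_real_smul (s t : ℝ) (ξ η : H) :
    omegaFunctional (s • ξ) (t • η) = (s * t) • omegaFunctional ξ η := by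
  ext x
  simp only [omegaFunctional, ContinuousLinearMap.comp_apply, innerSL_apply_apply,
    ContinuousLinearMap.apply_apply, ← Complex.coe_smul, map_smul, inner_smul_left, smul_apply,
    Complex.conj_ofReal, smul_eq_mul]
  push_cast
  ring

lemma compression_omegaFunctional [CompleteSpace H] (p : H →L[ℂ] H) (ξ η : H) :
    compression p (omegaFunctional ξ η) = omegaFunctional (p ξ) (p.adjoint η) := by
  ext x
  simp [omegaFunctional, ContinuousLinearMap.adjoint_inner_left]

def omegaHull (W : Set H) : Set ((H →L[ℂ] H) →L[ℂ] ℂ) :=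
  closure (convexHull ℝ {φ | ∃ ξ ∈ W, ∃ η ∈ W, φ = omegaFunctional ξ η})

lemma isClosed_omegaHull (W : Set H) : IsClosed (omegaHull W) :=
  isClosed_closure

lemma convex_omegaHull (W : Set H) : Convex ℝ (omegaHull W) :=
  (convex_convexHull ℝ _).closure

lemma omegaFunctional_mem_omegaHull {W : Set H} {ξ η : H} (hξ : ξ ∈ W) (hη : η ∈ W) :
    omegaFunctional ξ η ∈ omegaHull W :=
  subset_closure (subset_convexHull ℝ _ ⟨ξ, hξ, η, hη, rfl⟩)

lemma zero_mem_omegaHull {W : Set H} {ζ : H} (hζ : ζ ∈ W) (hnegζ : -ζ ∈ W) :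
    (0 : (H →L[ℂ] H) →L[ℂ] ℂ) ∈ omegaHull W := by
  have := (convex_omegaHull W).midpoint_mem (omegaFunctional_mem_omegaHull hnegζ hζ)
    (omegaFunctional_mem_omegaHull hζ hζ)
  rwa [omegaFunctional_neg_left, midpoint_neg_self] at this

lemma mapsTo_omegaHull {W : Set H} {C : Set ((H →L[ℂ] H) →L[ℂ] ℂ)}
    (T : ((H →L[ℂ] H) →L[ℂ] ℂ) →L[ℝ] ((H →L[ℂ] H) →L[ℂ] ℂ)) (hC : IsClosed C)
    (hCconv : Convex ℝ C) (hT : ∀ ξ ∈ W, ∀ η ∈ W, T (omegaFunctional ξ η) ∈ C) :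
    MapsTo T (omegaHull W) C :=
  closure_minimal (convexHull_min (by rintro _ ⟨ξ, hξ, η, hη, rfl⟩; exact hT ξ hξ η hη)
    (hCconv.linear_preimage T.toLinearMap)) (hC.preimage T.continuous)

lemma omegaFunctional_mem_smul_omegaHull {W : Set H} {ξ η : H}
    (hξ : ξ ≠ 0 → ‖ξ‖⁻¹ • ξ ∈ W) (hη : η ≠ 0 → ‖η‖⁻¹ • η ∈ W)
    (h0 : (0 : (H →L[ℂ] H) →L[ℂ] ℂ) ∈ omegaHull W) {a : ℝ} (ha : 0 < a)
    (hξη : ‖ξ‖ * ‖η‖ ≤ a) : omegaFunctional ξ η ∈ a • omegaHull W := by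
  rcases eq_or_ne ξ 0 with rfl | hξ0
  · rw [omegaFunctional_zero_left, ← smul_zero a]
    exact smul_mem_smul_set h0
  rcases eq_or_ne η 0 with rfl | hη0
  · rw [omegaFunctional_zero_right, ← smul_zero a]
    exact smul_mem_smul_set h0
  have hdecomp : omegaFunctional ξ η =
      a • ((‖ξ‖ * ‖η‖ / a) • omegaFunctional (‖ξ‖⁻¹ • ξ) (‖η‖⁻¹ • η)) := by
    rw [smul_smul, omegaFunctional_real_smul, smul_smul, mul_div_cancel₀ _ ha.ne',
      mul_mul_mul_comm, mul_inv_cancel₀ (norm_ne_zero_iff.2 hξ0),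
      mul_inv_cancel₀ (norm_ne_zero_iff.2 hη0), mul_one, one_smul]
  rw [hdecomp]
  refine smul_mem_smul_set ((convex_omegaHull W).smul_mem_of_zero_mem h0
    (omegaFunctional_mem_omegaHull (hξ hξ0) (hη hη0)) ⟨by positivity, ?_⟩)
  exact (div_le_one ha).2 hξη

lemma qK_le_ofReal_mul_qK {K K' : Set ((H →L[ℂ] H) →L[ℂ] ℂ)} {ψ : (H →L[ℂ] H) →L[ℂ] ℂ}
    (T : ((H →L[ℂ] H) →L[ℂ] ℂ) →ₗ[ℝ] ((H →L[ℂ] H) →L[ℂ] ℂ)) (hTψ : T ψ = ψ) {a : ℝ}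
    (ha : 0 < a) (hT : MapsTo T K (a • K')) : qK K' ψ ≤ ENNReal.ofReal a * qK K ψ := by
  have hscale : ∀ r : ℝ, ψ ∈ r • K → ψ ∈ (r * a) • K' := by
    rintro r ⟨φ, hφ, rfl⟩
    obtain ⟨φ', hφ', hTφ⟩ := hT hφ
    refine ⟨φ', hφ', ?_⟩
    rw [← hTψ, map_smul, ← hTφ, smul_smul]
  have ha' : ENNReal.ofReal a ≠ 0 := (ENNReal.ofReal_pos.2 ha).ne'
  rw [mul_comm, ← ENNReal.div_le_iff_le_mul (.inl ha') (.inl ENNReal.ofReal_ne_top)]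
  refine le_sInf ?_
  rintro _ ⟨r, hr, rfl, hψr⟩
  rw [ENNReal.div_le_iff_le_mul (.inl ha') (.inl ENNReal.ofReal_ne_top), ← ENNReal.ofReal_mul hr]
  exact sInf_le ⟨r * a, by positivity, rfl, hscale r hψr⟩

lemma exists_mem_apply_ne_zero [CompleteSpace H] {V : Set H}
    (hsep : ∀ ξ : H, (∀ η ∈ V, ⟪ξ, η⟫_ℂ = 0) → ξ = 0) {p : H →L[ℂ] H} (hp : IsSelfAdjoint p)
    (hp0 : p ≠ 0) : ∃ ξ ∈ V, p ξ ≠ 0 := by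
  by_contra! h
  refine hp0 (ContinuousLinearMap.ext fun x => hsep _ fun η hη => ?_)
  rw [← ContinuousLinearMap.adjoint_inner_right, hp.adjoint_eq, h η hη, inner_zero_right]

lemma neg_mem_compatibleVectors (p : H →L[ℂ] H) (l : ℝ) {V : Set H}
    (hV : ∀ ξ ∈ V, -ξ ∈ V) {ζ : H}
    (hζ : ζ ∈ {ζ : H | (∃ ξ ∈ V, ζ = l • p ξ) ∧ ‖ζ‖ = 1}) :
    -ζ ∈ {ζ : H | (∃ ξ ∈ V, ζ = l • p ξ) ∧ ‖ζ‖ = 1} := by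
  obtain ⟨⟨ξ, hξ, rfl⟩, hnorm⟩ := hζ
  exact ⟨⟨-ξ, hV ξ hξ, by simp⟩, by simpa using hnorm⟩

end VectorFunctionals

theorem stmt7_general {H : Type*} [NormedAddCommGroup H] [InnerProductSpace ℂ H] [CompleteSpace H]
    (V : Set H)
    (hunit : ∀ ξ ∈ V, ‖ξ‖ = 1)
    (hbal : ∀ ξ ∈ V, ∀ c : ℂ, ‖c‖ = 1 → c • ξ ∈ V)
    (hsep : ∀ ξ : H, (∀ η ∈ V, ⟪ξ, η⟫_ℂ = 0) → ξ = 0)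
    (K : Set ((H →L[ℂ] H) →L[ℂ] ℂ))
    (hK : K = closure (convexHull ℝ
      {φ : (H →L[ℂ] H) →L[ℂ] ℂ | ∃ ξ ∈ V, ∃ η ∈ V, φ = omegaFunctional ξ η}))
    (p : H →L[ℂ] H) (hp_idem : IsIdempotentElem p) (hp_sa : IsSelfAdjoint p) (hp_ne : p ≠ 0)
    (l : ℝ)
    (Vp : Set H) (hVp : Vp = {ζ : H | (∃ ξ ∈ V, ζ = l • p ξ) ∧ ‖ζ‖ = 1})
    (Kp : Set ((H →L[ℂ] H) →L[ℂ] ℂ))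
    (hKp : Kp = closure (convexHull ℝ
      {φ : (H →L[ℂ] H) →L[ℂ] ℂ | ∃ ξ ∈ Vp, ∃ η ∈ Vp, φ = omegaFunctional ξ η}))
    (hcompat : ∀ ξ ∈ V, p ξ ≠ 0 → ‖p ξ‖⁻¹ • p ξ ∈ Vp)
    (μ : ℝ) (hμ : μ = sSup {r : ℝ | 1 ≤ r ∧ ∀ ξ ∈ V, ‖r • p ξ‖ ≤ 1})
    (ψ : (H →L[ℂ] H) →L[ℂ] ℂ)
    (hψp : ∀ x : H →L[ℂ] H, ψ x = ψ (p ∘L x ∘L p)) :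
    qK Kp ψ ≤ ENNReal.ofReal (1 / μ ^ 2) * qK K ψ := by
  change K = omegaHull V at hK
  change Kp = omegaHull Vp at hKp
  subst hK hKp
  obtain ⟨ξ₀, hξ₀, hpξ₀⟩ := exists_mem_apply_ne_zero hsep hp_sa hp_ne
  have hp_le : ∀ ξ ∈ V, ‖p ξ‖ ≤ 1 := fun ξ hξ => (p.le_opNorm ξ).trans <| by
    rw [hunit ξ hξ, mul_one]
    exact IsStarProjection.norm_le p ⟨hp_idem, hp_sa⟩
  have hμ_pos : 0 < μ := hμ ▸ one_pos.trans_le (one_le_sSup_scales hp_le ⟨ξ₀, hξ₀, hpξ₀⟩)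
  have hμ_mul : ∀ ξ ∈ V, μ * ‖p ξ‖ ≤ 1 := fun ξ hξ =>
    hμ ▸ sSup_scales_mul_norm_le_one hp_le hξ
  have hVp_neg : ∀ ζ ∈ Vp, -ζ ∈ Vp := fun ζ hζ => hVp ▸ neg_mem_compatibleVectors p l
    (fun ξ hξ => by simpa using hbal ξ hξ (-1) (by simp)) (hVp ▸ hζ)
  have h0 : (0 : (H →L[ℂ] H) →L[ℂ] ℂ) ∈ omegaHull Vp :=
    zero_mem_omegaHull (hcompat ξ₀ hξ₀ hpξ₀) (hVp_neg _ (hcompat ξ₀ hξ₀ hpξ₀))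
  refine qK_le_ofReal_mul_qK ((compression p).restrictScalars ℝ).toLinearMap
    (ContinuousLinearMap.ext fun x => (hψp x).symm) (by positivity) ?_
  refine mapsTo_omegaHull _ ((isClosed_omegaHull _).smul_of_ne_zero (by positivity))
    ((convex_omegaHull _).smul _) fun ξ hξ η hη => ?_
  rw [ContinuousLinearMap.coe_restrictScalars', compression_omegaFunctional, hp_sa.adjoint_eq]
  refine omegaFunctional_mem_smul_omegaHull (hcompat ξ hξ) (hcompat η hη) h0 (by positivity) ?_
  rw [le_div_iff₀ (by positivity)]
  calc ‖p ξ‖ * ‖p η‖ * μ ^ 2 = (μ * ‖p ξ‖) * (μ * ‖p η‖) := by ring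
    _ ≤ 1 := mul_le_one₀ (hμ_mul ξ hξ) (by positivity) (hμ_mul η hη)

/-- Suppose `p` is compatible with `(V, l)` and
`μ := sup {r ≥ 1 : r·pV ⊂ B₁(H)}`. Then every normal functional `ψ` on `B(pH)`
(viewed on `B(H)` via `ψ(x) = ψ(pxp)`) satisfies `q_{K_{p,l}}(ψ) ≤ (1/μ²) · q_K(ψ)`. -/
theorem stmt7 {H : Type*} [NormedAddCommGroup H] [InnerProductSpace ℂ H] [CompleteSpace H]
    (V : Set H)
    (hunit : ∀ ξ ∈ V, ‖ξ‖ = 1)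
    (hbal : ∀ ξ ∈ V, ∀ c : ℂ, ‖c‖ = 1 → c • ξ ∈ V)
    (hsep : ∀ ξ : H, (∀ η ∈ V, ⟪ξ, η⟫_ℂ = 0) → ξ = 0)
    (K : Set ((H →L[ℂ] H) →L[ℂ] ℂ))
    (hK : K = closure (convexHull ℝ
      {φ : (H →L[ℂ] H) →L[ℂ] ℂ | ∃ ξ ∈ V, ∃ η ∈ V, φ = omegaFunctional ξ η}))
    (p : H →L[ℂ] H) (hp_idem : IsIdempotentElem p) (hp_sa : IsSelfAdjoint p) (hp_ne : p ≠ 0)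
    (l : ℝ) (hl : 1 ≤ l)
    (Vp : Set H) (hVp : Vp = {ζ : H | (∃ ξ ∈ V, ζ = l • p ξ) ∧ ‖ζ‖ = 1})
    (Kp : Set ((H →L[ℂ] H) →L[ℂ] ℂ))
    (hKp : Kp = closure (convexHull ℝ
      {φ : (H →L[ℂ] H) →L[ℂ] ℂ | ∃ ξ ∈ Vp, ∃ η ∈ Vp, φ = omegaFunctional ξ η}))
    (hcompat : ∀ ξ ∈ V, p ξ ≠ 0 → ‖p ξ‖⁻¹ • p ξ ∈ Vp)
    (μ : ℝ) (hμ : μ = sSup {r : ℝ | 1 ≤ r ∧ ∀ ξ ∈ V, ‖r • p ξ‖ ≤ 1})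
    (ψ : (H →L[ℂ] H) →L[ℂ] ℂ) (hψ : IsNormalFunctional ψ)
    (hψp : ∀ x : H →L[ℂ] H, ψ x = ψ (p ∘L x ∘L p)) :
    qK Kp ψ ≤ ENNReal.ofReal (1 / μ ^ 2) * qK K ψ :=
  stmt7_general V hunit hbal hsep K hK p hp_idem hp_sa hp_ne l Vp hVp Kp hKp hcompat μ hμ ψ hψp
end
end

section
/- Let H be a complex Hilbert space, k ∈ ℕ, H^{⊗k} the k-fold Hilbert space tensor power, V^{⊗k} the set of unit product vectors η₁⊗…⊗η_k with each ηᵢ a unit vector of H, and K^{⊗k} the norm-closed convex hull in B(H^{⊗k})_* of {ω_{ξ,η} : ξ, η ∈ V^{⊗k}}. Then every normal state φ on B(H^{⊗k}) satisfies q_{K^{⊗k}}(φ) ≥ 1, and q_{K^{⊗k}}(φ) = 1 if and only if φ is separable, i.e. φ lies in the norm-closed convex hull of {ω_ξ : ξ ∈ V^{⊗k}}. -/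
noncomputable section

open scoped InnerProductSpace ENNReal Pointwise

/-- An abstract presentation of the `k`-fold Hilbert space tensor power `H^{⊗k}` of `H`,
realized on a Hilbert space `T`: a continuous multilinear map `tprod` (the elementary tensors
`η₁ ⊗ ... ⊗ η_k`) whose inner products multiply, whose range has dense linear span, together
with the permutation unitaries `U_π` permuting the tensor factors. -/
structure HilbertTensorPower (k : ℕ) (H T : Type*) [NormedAddCommGroup H]
    [InnerProductSpace ℂ H] [NormedAddCommGroup T] [InnerProductSpace ℂ T] where
  tprod : ContinuousMultilinearMap ℂ (fun _ : Fin k => H) T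
  inner_tprod : ∀ ξ η : Fin k → H, ⟪tprod ξ, tprod η⟫_ℂ = ∏ i, ⟪ξ i, η i⟫_ℂ
  span_dense : (Submodule.span ℂ (Set.range ⇑tprod)).topologicalClosure = ⊤
  U : Equiv.Perm (Fin k) → (T →L[ℂ] T)
  U_isometry : ∀ π, Isometry ⇑(U π)
  U_surjective : ∀ π, Function.Surjective ⇑(U π)
  U_tprod : ∀ (π : Equiv.Perm (Fin k)) (ξ : Fin k → H),
    U π (tprod ξ) = tprod fun i => ξ (π i)

namespace HilbertTensorPower

variable {k : ℕ} {H T : Type*} [NormedAddCommGroup H] [InnerProductSpace ℂ H]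
  [NormedAddCommGroup T] [InnerProductSpace ℂ T]

/-- The symmetrization projection `P₊ = (1/k!) Σ_π U_π`. -/
def Pplus (P : HilbertTensorPower k H T) : T →L[ℂ] T :=
  ((k.factorial : ℂ))⁻¹ • ∑ π : Equiv.Perm (Fin k), P.U π

/-- The antisymmetrization projection `P₋ = (1/k!) Σ_π sign(π) U_π`. -/
def Pminus (P : HilbertTensorPower k H T) : T →L[ℂ] T :=
  ((k.factorial : ℂ))⁻¹ •
    ∑ π : Equiv.Perm (Fin k), (((Equiv.Perm.sign π : ℤ) : ℂ)) • P.U π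

/-- The wedge product `η₁ ∧ ... ∧ η_k := √(k!) · P₋(η₁ ⊗ ... ⊗ η_k)`. -/
def wedge (P : HilbertTensorPower k H T) (η : Fin k → H) : T :=
  (Real.sqrt k.factorial : ℂ) • P.Pminus (P.tprod η)

/-- The set `V^{⊗k}` of unit product vectors. -/
def prodVecs (P : HilbertTensorPower k H T) : Set T :=
  {ζ : T | ∃ η : Fin k → H, (∀ i, ‖η i‖ = 1) ∧ ζ = P.tprod η}

/-- The set `V^{∨k}` of symmetric unit product vectors `η ⊗ ... ⊗ η`. -/
def symVecs (P : HilbertTensorPower k H T) : Set T :=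
  {ζ : T | ∃ η : H, ‖η‖ = 1 ∧ ζ = P.tprod fun _ => η}

/-- The set `V^{∧k}` of unit wedge (Slater) vectors. -/
def wedgeVecs (P : HilbertTensorPower k H T) : Set T :=
  {ζ : T | ∃ η : Fin k → H, ζ = P.wedge η ∧ ‖ζ‖ = 1}

end HilbertTensorPower

/-!
Every `ω_{ξ,η}` with `ξ, η` unit vectors has norm at most one, so `K` lies in the unit ball and
`‖φ‖ = 1` forces `q_K(φ) ≥ 1`; separable states lie in `K`, so for them `q_K(φ) = 1`.
Conversely, `q_K(φ) = 1` and closedness of `K` give `φ ∈ K`. For `ψ = ∑ wᵢ ω_{ξᵢ,ηᵢ}` in the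
convex hull, `σ = ∑ wᵢ ω_{ξᵢ}` is separable and `‖ψ - σ‖² ≤ ∑ wᵢ ‖ηᵢ - ξᵢ‖² = 2 - 2 Re ψ(1)`.
This bound passes to the closure `K`, and a state has `φ(1) = 1` because a positive functional
attains its norm at the unit (Cauchy–Schwarz in its GNS space); hence `φ` is a limit of
separable states.
-/

open scoped ComplexOrder

namespace PositiveLinearMap

variable {A : Type*} [CStarAlgebra A] [PartialOrder A] [StarOrderedRing A]

lemma norm_apply_le_norm_apply_one_mul (f : A →ₚ[ℂ] ℂ) (a : A) : ‖f a‖ ≤ ‖f 1‖ * ‖a‖ := by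
  have norm_toPreGNS_sq (b : A) : ‖f.toPreGNS b‖ ^ 2 = ‖f (star b * b)‖ := by
    have h := congrArg norm (f.preGNS_norm_sq (f.toPreGNS b))
    rwa [← Complex.ofReal_pow, Complex.norm_real, Real.norm_of_nonneg (by positivity)] at h
  have cauchy_schwarz : ‖f a‖ ^ 2 ≤ ‖f 1‖ * ‖f (star a * a)‖ := by
    have h := norm_inner_le_norm (𝕜 := ℂ) (f.toPreGNS 1) (f.toPreGNS a)
    rw [preGNS_inner_def, ofPreGNS_toPreGNS, ofPreGNS_toPreGNS, star_one, one_mul] at h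
    have h2 := pow_le_pow_left₀ (norm_nonneg _) h 2
    rwa [mul_pow, norm_toPreGNS_sq, norm_toPreGNS_sq, star_one, one_mul] at h2
  have hsq : ‖f (star a * a)‖ ≤ ‖f 1‖ * ‖a‖ ^ 2 := by
    simpa [CStarRing.norm_star_mul_self, sq] using
      f.norm_apply_le_of_nonneg _ (star_mul_self_nonneg a)
  refine pow_le_pow_iff_left₀ (norm_nonneg _) (by positivity) two_ne_zero |>.mp ?_
  calc ‖f a‖ ^ 2 ≤ ‖f 1‖ * (‖f 1‖ * ‖a‖ ^ 2) := cauchy_schwarz.trans (by gcongr)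
    _ = (‖f 1‖ * ‖a‖) ^ 2 := by ring

end PositiveLinearMap

lemma ContinuousLinearMap.apply_one_eq_one_of_nonneg_of_norm_eq_one {A : Type*} [CStarAlgebra A]
    [PartialOrder A] [StarOrderedRing A] (φ : A →L[ℂ] ℂ) (hpos : ∀ a, 0 ≤ a → 0 ≤ φ a)
    (hφ : ‖φ‖ = 1) : φ 1 = 1 := by
  set f := PositiveLinearMap.mk₀ φ.toLinearMap hpos
  have hle : ‖φ‖ ≤ ‖φ 1‖ :=
    φ.opNorm_le_bound (norm_nonneg _) (f.norm_apply_le_norm_apply_one_mul)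
  have hone : ‖(1 : A)‖ ≤ 1 := by
    rcases subsingleton_or_nontrivial A with _ | _
    · simp [Subsingleton.elim (1 : A) 0]
    · exact CStarRing.norm_one.le
  have hge : ‖φ 1‖ ≤ ‖φ‖ :=
    (φ.le_opNorm 1).trans (mul_le_of_le_one_right (norm_nonneg _) hone)
  rw [Complex.eq_coe_norm_of_nonneg (hpos 1 zero_le_one), le_antisymm hge hle, hφ,
    Complex.ofReal_one]

lemma IsNormalState.apply_one {T : Type*} [NormedAddCommGroup T] [InnerProductSpace ℂ T]
    [CompleteSpace T] {φ : (T →L[ℂ] T) →L[ℂ] ℂ} (hφ : IsNormalState φ) : φ 1 = 1 := by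
  refine φ.apply_one_eq_one_of_nonneg_of_norm_eq_one (fun x hx => ?_) hφ.2.1
  obtain ⟨hre, him⟩ := hφ.2.2 x ((ContinuousLinearMap.nonneg_iff_isPositive x).mp hx)
  exact Complex.nonneg_iff.mpr ⟨hre, him.symm⟩

lemma convexOn_norm_fst_sub_snd_sq {E : Type*} [SeminormedAddCommGroup E] [NormedSpace ℝ E] :
    ConvexOn ℝ Set.univ fun q : E × E => ‖q.1 - q.2‖ ^ 2 :=
  ((convexOn_norm convex_univ).comp_linearMap
    (LinearMap.fst ℝ E E - LinearMap.snd ℝ E E)).pow (fun _ _ => norm_nonneg _) 2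

section VectorFunctionals

variable {T : Type*} [NormedAddCommGroup T] [InnerProductSpace ℂ T]

lemma omegaFunctional_apply (ξ η : T) (x : T →L[ℂ] T) : omegaFunctional ξ η x = ⟪η, x ξ⟫_ℂ :=
  rfl

lemma norm_omegaFunctional_le (ξ η : T) : ‖omegaFunctional ξ η‖ ≤ ‖ξ‖ * ‖η‖ := by
  refine ContinuousLinearMap.opNorm_le_bound _ (by positivity) fun x => ?_
  calc ‖⟪η, x ξ⟫_ℂ‖ ≤ ‖η‖ * (‖x‖ * ‖ξ‖) :=
        (norm_inner_le_norm _ _).trans (by gcongr; exact x.le_opNorm ξ)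
    _ = ‖ξ‖ * ‖η‖ * ‖x‖ := by ring

lemma omegaFunctional_sub_right (ξ η ζ : T) :
    omegaFunctional ξ η - omegaFunctional ξ ζ = omegaFunctional ξ (η - ζ) := by
  ext x
  simp [omegaFunctional_apply]

def vectorFunctionals (V : Set T) : Set ((T →L[ℂ] T) →L[ℂ] ℂ) :=
  {φ | ∃ ξ ∈ V, ∃ η ∈ V, φ = omegaFunctional ξ η}

def vectorStates (V : Set T) : Set ((T →L[ℂ] T) →L[ℂ] ℂ) :=
  {ψ | ∃ ξ ∈ V, ψ = omegaFunctional ξ ξ}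

variable {V : Set T}

lemma vectorStates_subset_vectorFunctionals : vectorStates V ⊆ vectorFunctionals V := by
  rintro _ ⟨ξ, hξ, rfl⟩
  exact ⟨ξ, hξ, ξ, hξ, rfl⟩

lemma norm_le_one_of_mem_closure_convexHull_vectorFunctionals (hV : ∀ ζ ∈ V, ‖ζ‖ = 1)
    {ψ : (T →L[ℂ] T) →L[ℂ] ℂ} (hψ : ψ ∈ closure (convexHull ℝ (vectorFunctionals V))) :
    ‖ψ‖ ≤ 1 := by
  -- Naming `E` is needed: unification does not find the operator norm on this type by itself.
  have hball := (convexOn_norm (E := (T →L[ℂ] T) →L[ℂ] ℂ) convex_univ).convex_le 1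
  refine (closure_minimal (convexHull_min ?_ hball) ?_ hψ).2
  · rintro _ ⟨ξ, hξ, η, hη, rfl⟩
    exact ⟨trivial, by simpa [hV ξ hξ, hV η hη] using norm_omegaFunctional_le ξ η⟩
  · simpa using isClosed_le (continuous_norm (E := (T →L[ℂ] T) →L[ℂ] ℂ)) continuous_const

lemma norm_omegaFunctional_sub_sq_add_re_le {ξ η : T} (hξ : ‖ξ‖ = 1) (hη : ‖η‖ = 1) :
    ‖omegaFunctional ξ η - omegaFunctional ξ ξ‖ ^ 2 + 2 * (omegaFunctional ξ η 1).re ≤ 2 := by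
  have hnorm : ‖omegaFunctional ξ η - omegaFunctional ξ ξ‖ ≤ ‖η - ξ‖ := by
    simpa [omegaFunctional_sub_right, hξ] using norm_omegaFunctional_le ξ (η - ξ)
  have hsq := norm_sub_sq (𝕜 := ℂ) η ξ
  rw [hξ, hη, RCLike.re_to_complex] at hsq
  change _ + 2 * (⟪η, ξ⟫_ℂ).re ≤ 2
  nlinarith [norm_nonneg (omegaFunctional ξ η - omegaFunctional ξ ξ)]

/- The pairs `(ω_{ξ,η}, ω_{ξ,ξ})` lie in the convex sublevel set `‖q.1 - q.2‖² + 2 Re q.1(1) ≤ 2`;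
projecting the convex hull of these pairs onto its two factors produces `σ` from `ψ`. -/
lemma exists_mem_convexHull_vectorStates_norm_sub_sq_le (hV : ∀ ζ ∈ V, ‖ζ‖ = 1)
    {ψ : (T →L[ℂ] T) →L[ℂ] ℂ} (hψ : ψ ∈ convexHull ℝ (vectorFunctionals V)) :
    ∃ σ ∈ convexHull ℝ (vectorStates V), ‖ψ - σ‖ ^ 2 ≤ 2 - 2 * (ψ 1).re := by
  let G : Set (((T →L[ℂ] T) →L[ℂ] ℂ) × ((T →L[ℂ] T) →L[ℂ] ℂ)) :=
    {q | ∃ ξ ∈ V, ∃ η ∈ V, q = (omegaFunctional ξ η, omegaFunctional ξ ξ)}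
  have fst_image : Prod.fst '' G = vectorFunctionals V := by
    ext χ
    constructor
    · rintro ⟨_, ⟨ξ, hξ, η, hη, rfl⟩, rfl⟩
      exact ⟨ξ, hξ, η, hη, rfl⟩
    · rintro ⟨ξ, hξ, η, hη, rfl⟩
      exact ⟨_, ⟨ξ, hξ, η, hη, rfl⟩, rfl⟩
  have snd_image : Prod.snd '' G ⊆ vectorStates V := by
    rintro _ ⟨_, ⟨ξ, hξ, η, -, rfl⟩, rfl⟩
    exact ⟨ξ, hξ, rfl⟩
  have convexOn : ConvexOn ℝ Set.univ
      fun q : ((T →L[ℂ] T) →L[ℂ] ℂ) × ((T →L[ℂ] T) →L[ℂ] ℂ) =>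
        ‖q.1 - q.2‖ ^ 2 + 2 * (q.1 1).re := by
    refine (convexOn_norm_fst_sub_snd_sq (E := (T →L[ℂ] T) →L[ℂ] ℂ)).add
      ⟨convex_univ, fun x _ y _ a b _ _ _ => le_of_eq ?_⟩
    simp only [Prod.fst_add, Prod.smul_fst, add_apply, smul_apply, Complex.add_re,
      Complex.real_smul, Complex.re_ofReal_mul, smul_eq_mul]
    ring
  have G_subset : G ⊆ {q | q ∈ Set.univ ∧ ‖q.1 - q.2‖ ^ 2 + 2 * (q.1 1).re ≤ 2} := by
    rintro _ ⟨ξ, hξ, η, hη, rfl⟩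
    exact ⟨trivial, norm_omegaFunctional_sub_sq_add_re_le (hV ξ hξ) (hV η hη)⟩
  rw [← fst_image, ← LinearMap.coe_fst (R := ℝ), ← LinearMap.image_convexHull] at hψ
  obtain ⟨q, hq, rfl⟩ := hψ
  refine ⟨q.2, convexHull_mono snd_image ?_, ?_⟩
  · rw [← LinearMap.coe_snd (R := ℝ), ← LinearMap.image_convexHull]
    exact ⟨q, hq, rfl⟩
  · have := (convexHull_min G_subset (convexOn.convex_le 2) hq).2
    simp only [LinearMap.coe_fst]
    linarith

lemma infDist_convexHull_vectorStates_sq_le (hV : ∀ ζ ∈ V, ‖ζ‖ = 1)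
    {ψ : (T →L[ℂ] T) →L[ℂ] ℂ} (hψ : ψ ∈ closure (convexHull ℝ (vectorFunctionals V))) :
    Metric.infDist ψ (convexHull ℝ (vectorStates V)) ^ 2 ≤ 2 - 2 * (ψ 1).re := by
  have hclosed : IsClosed {χ : (T →L[ℂ] T) →L[ℂ] ℂ |
      Metric.infDist χ (convexHull ℝ (vectorStates V)) ^ 2 ≤ 2 - 2 * (χ 1).re} :=
    isClosed_le (by fun_prop) (by fun_prop)
  refine closure_minimal (fun χ hχ => ?_) hclosed hψ
  obtain ⟨σ, hσ, hle⟩ := exists_mem_convexHull_vectorStates_norm_sub_sq_le hV hχ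
  calc Metric.infDist χ (convexHull ℝ (vectorStates V)) ^ 2 ≤ ‖χ - σ‖ ^ 2 := by
        gcongr
        · exact Metric.infDist_nonneg
        · exact (Metric.infDist_le_dist_of_mem hσ).trans_eq (dist_eq_norm χ σ)
    _ ≤ 2 - 2 * (χ 1).re := hle

lemma mem_closure_convexHull_vectorStates (hV : ∀ ζ ∈ V, ‖ζ‖ = 1)
    {ψ : (T →L[ℂ] T) →L[ℂ] ℂ} (hψ : ψ ∈ closure (convexHull ℝ (vectorFunctionals V)))
    (h1 : ψ 1 = 1) : ψ ∈ closure (convexHull ℝ (vectorStates V)) := by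
  have hS : (convexHull ℝ (vectorStates V)).Nonempty := by
    obtain ⟨χ, hχ⟩ := closure_nonempty_iff.mp ⟨ψ, hψ⟩
    obtain ⟨σ, hσ, -⟩ := exists_mem_convexHull_vectorStates_norm_sub_sq_le hV hχ
    exact ⟨σ, hσ⟩
  have hdist := infDist_convexHull_vectorStates_sq_le hV hψ
  rw [h1, Complex.one_re, mul_one, sub_self] at hdist
  rw [Metric.mem_closure_iff_infDist_zero hS]
  exact pow_eq_zero_iff two_ne_zero |>.mp (le_antisymm hdist (sq_nonneg _))

end VectorFunctionals

section MinkowskiFunctional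

variable {H : Type*} [NormedAddCommGroup H] [InnerProductSpace ℂ H]
  {K : Set ((H →L[ℂ] H) →L[ℂ] ℂ)} {ψ : (H →L[ℂ] H) →L[ℂ] ℂ}

lemma ofReal_norm_le_qK (hK : ∀ χ ∈ K, ‖χ‖ ≤ 1) : ENNReal.ofReal ‖ψ‖ ≤ qK K ψ := by
  refine le_sInf ?_
  rintro _ ⟨r, hr, rfl, χ, hχ, rfl⟩
  gcongr
  calc ‖r • χ‖ ≤ ‖r‖ * ‖χ‖ := ContinuousLinearMap.opNorm_smul_le r χ
    _ ≤ r := by simpa [Real.norm_of_nonneg hr] using mul_le_of_le_one_right hr (hK χ hχ)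

lemma qK_le_one (hψ : ψ ∈ K) : qK K ψ ≤ 1 :=
  sInf_le ⟨1, zero_le_one, ENNReal.ofReal_one.symm, by rwa [one_smul]⟩

lemma mem_of_qK_eq_one (hK : IsClosed K) (hψ : qK K ψ = 1) : ψ ∈ K := by
  refine hK.closure_subset
    ((Metric.mem_closure_iff (α := (H →L[ℂ] H) →L[ℂ] ℂ)).mpr fun ε hε => ?_)
  set δ := ε / (‖ψ‖ + 1)
  have hδpos : 0 < δ := by positivity
  obtain ⟨_, ⟨r, hr, rfl, hmem⟩, hlt⟩ :=
    sInf_lt_iff.mp (hψ.trans_lt (ENNReal.one_lt_ofReal.mpr (lt_add_of_pos_right 1 hδpos)))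
  have hr1 : 1 ≤ r := by
    rw [← ENNReal.one_le_ofReal, ← hψ]
    exact sInf_le ⟨r, hr, rfl, hmem⟩
  have hrδ : r < 1 + δ := (ENNReal.ofReal_lt_ofReal_iff (by positivity)).mp hlt
  have hinv : ‖1 - r⁻¹‖ ≤ δ := by
    have hr0 : 0 < r := by linarith
    rw [Real.norm_of_nonneg (sub_nonneg.mpr (inv_le_one_of_one_le₀ hr1)), sub_le_iff_le_add]
    nlinarith [mul_inv_cancel₀ hr0.ne', inv_pos.mpr hr0]
  refine ⟨r⁻¹ • ψ, (Set.mem_smul_set_iff_inv_smul_mem₀ (by positivity) K ψ).mp hmem, ?_⟩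
  calc dist ψ (r⁻¹ • ψ) = ‖(1 - r⁻¹) • ψ‖ := by
        rw [dist_eq_norm ψ (r⁻¹ • ψ), sub_smul (R := ℝ) (M := (H →L[ℂ] H) →L[ℂ] ℂ), one_smul]
    _ ≤ ‖1 - r⁻¹‖ * ‖ψ‖ := ContinuousLinearMap.opNorm_smul_le _ ψ
    _ ≤ δ * ‖ψ‖ := by gcongr
    _ < δ * (‖ψ‖ + 1) := by gcongr; linarith
    _ = ε := div_mul_cancel₀ ε (by positivity)

end MinkowskiFunctional

lemma HilbertTensorPower.norm_eq_one_of_mem_prodVecs {k : ℕ} {H T : Type*}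
    [NormedAddCommGroup H] [InnerProductSpace ℂ H] [NormedAddCommGroup T]
    [InnerProductSpace ℂ T] (P : HilbertTensorPower k H T) {ζ : T} (hζ : ζ ∈ P.prodVecs) :
    ‖ζ‖ = 1 := by
  obtain ⟨η, hη, rfl⟩ := hζ
  have h := P.inner_tprod η η
  simp only [inner_self_eq_norm_sq_to_K, hη] at h
  norm_cast at h
  rwa [one_pow, Finset.prod_const_one, Nat.cast_one,
    pow_eq_one_iff_of_nonneg (norm_nonneg _) two_ne_zero] at h

theorem stmt8_general {H T : Type*} [NormedAddCommGroup H] [InnerProductSpace ℂ H]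
    [NormedAddCommGroup T] [InnerProductSpace ℂ T] [CompleteSpace T]
    (k : ℕ) (P : HilbertTensorPower k H T)
    (K : Set ((T →L[ℂ] T) →L[ℂ] ℂ))
    (hK : K = closure (convexHull ℝ
      {φ : (T →L[ℂ] T) →L[ℂ] ℂ | ∃ ξ ∈ P.prodVecs, ∃ η ∈ P.prodVecs,
        φ = omegaFunctional ξ η}))
    (φ : (T →L[ℂ] T) →L[ℂ] ℂ) (hφ : IsNormalState φ) :
    1 ≤ qK K φ ∧
    (qK K φ = 1 ↔ φ ∈ closure (convexHull ℝ
      {ψ : (T →L[ℂ] T) →L[ℂ] ℂ | ∃ ξ ∈ P.prodVecs, ψ = omegaFunctional ξ ξ})) := by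
  have hV : ∀ ζ ∈ P.prodVecs, ‖ζ‖ = 1 := fun _ => P.norm_eq_one_of_mem_prodVecs
  change K = closure (convexHull ℝ (vectorFunctionals P.prodVecs)) at hK
  change _ ∧ (_ ↔ φ ∈ closure (convexHull ℝ (vectorStates P.prodVecs)))
  have one_le : 1 ≤ qK K φ := by
    simpa [hφ.2.1] using ofReal_norm_le_qK (ψ := φ) (hK ▸ fun χ hχ =>
      norm_le_one_of_mem_closure_convexHull_vectorFunctionals hV hχ)
  refine ⟨one_le, fun h => ?_, fun h => le_antisymm (qK_le_one ?_) one_le⟩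
  · have hφK := mem_of_qK_eq_one (hK ▸ isClosed_closure) h
    exact mem_closure_convexHull_vectorStates hV (hK ▸ hφK) hφ.apply_one
  · exact hK ▸ closure_mono (convexHull_mono vectorStates_subset_vectorFunctionals) h

/-- Let `K^{⊗k}` be the norm-closed convex hull of the vector functionals
`ω_{ξ,η}` with `ξ, η` unit product vectors of `H^{⊗k}`. Then every normal state `φ` on
`B(H^{⊗k})` satisfies `q_{K^{⊗k}}(φ) ≥ 1`, with equality iff `φ` is separable, i.e. `φ` lies
in the norm-closed convex hull of `{ω_ξ : ξ ∈ V^{⊗k}}`. -/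
theorem stmt8 {H T : Type*} [NormedAddCommGroup H] [InnerProductSpace ℂ H] [CompleteSpace H]
    [NormedAddCommGroup T] [InnerProductSpace ℂ T] [CompleteSpace T]
    (k : ℕ) (P : HilbertTensorPower k H T)
    (K : Set ((T →L[ℂ] T) →L[ℂ] ℂ))
    (hK : K = closure (convexHull ℝ
      {φ : (T →L[ℂ] T) →L[ℂ] ℂ | ∃ ξ ∈ P.prodVecs, ∃ η ∈ P.prodVecs,
        φ = omegaFunctional ξ η}))
    (φ : (T →L[ℂ] T) →L[ℂ] ℂ) (hφ : IsNormalState φ) :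
    1 ≤ qK K φ ∧
    (qK K φ = 1 ↔ φ ∈ closure (convexHull ℝ
      {ψ : (T →L[ℂ] T) →L[ℂ] ℂ | ∃ ξ ∈ P.prodVecs, ψ = omegaFunctional ξ ξ})) :=
  stmt8_general k P K hK φ hφ
end
end

section
/- Let H be a complex Hilbert space. The antisymmetrization projection P₋ on H^{⊗k} is compatible with the pair (V^{⊗k}, √(k!)): for every ξ = η₁⊗…⊗η_k ∈ V^{⊗k} with P₋ξ ≠ 0, the normalized vector P₋ξ/‖P₋ξ‖ lies in V^{∧k}. In contrast, the symmetrization projection P₊ is not compatible with (V^{⊗k}, 1): for instance, for k = 2 and any two linearly independent unit vectors ξ, η ∈ H, the vector P₊(ξ⊗η) = (1/2)(ξ⊗η + η⊗ξ) is nonzero but is not a scalar multiple of any product vector ζ₁⊗ζ₂; in particular its normalization does not belong to V^{∨2}. -/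
noncomputable section

open scoped InnerProductSpace ENNReal Pointwise

namespace HilbertTensorPower

variable {H' T' : Type*} [NormedAddCommGroup H'] [InnerProductSpace ℂ H']
  [NormedAddCommGroup T'] [InnerProductSpace ℂ T']

lemma pplus_two (Q : HilbertTensorPower 2 H' T') (ξ η : H') :
    Q.Pplus (Q.tprod ![ξ, η]) = (2 : ℂ)⁻¹ • (Q.tprod ![ξ, η] + Q.tprod ![η, ξ]) := by
  have huniv : (Finset.univ : Finset (Equiv.Perm (Fin 2))) = {1, Equiv.swap 0 1} := by decide
  have hne : (1 : Equiv.Perm (Fin 2)) ≠ Equiv.swap 0 1 := by decide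
  unfold Pplus
  rw [huniv, Finset.sum_pair hne]
  rw [ContinuousLinearMap.smul_apply, ContinuousLinearMap.add_apply]
  rw [Q.U_tprod, Q.U_tprod]
  have h1 : (fun i => ![ξ, η] ((1 : Equiv.Perm (Fin 2)) i)) = ![ξ, η] := by
    funext i; simp
  have h2 : (fun i => ![ξ, η] (Equiv.swap (0 : Fin 2) 1 i)) = ![η, ξ] := by
    funext i; fin_cases i <;> simp
  rw [h1, h2]
  norm_num [Nat.factorial]

lemma inner_two (Q : HilbertTensorPower 2 H' T') (u v x y : H') :
    ⟪Q.tprod ![u, v], Q.tprod ![x, y]⟫_ℂ = ⟪u, x⟫_ℂ * ⟪v, y⟫_ℂ := by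
  rw [Q.inner_tprod]; simp [Fin.prod_univ_two]

end HilbertTensorPower

/-- `P₋` is compatible with `(V^{⊗k}, √(k!))`: the normalization of every
nonzero `P₋(η₁ ⊗ ... ⊗ η_k)` (with the `ηᵢ` unit vectors) lies in `V^{∧k}`. In contrast `P₊`
is not compatible with `(V^{⊗k}, 1)`: for `k = 2` and linearly independent unit vectors
`ξ, η`, the vector `P₊(ξ ⊗ η) = (1/2)(ξ ⊗ η + η ⊗ ξ)` is nonzero, is not a product vector
(nor a scalar multiple of one), and its normalization does not lie in `V^{∨2}`. -/
theorem stmt13 {H T T₂ : Type*} [NormedAddCommGroup H] [InnerProductSpace ℂ H] [CompleteSpace H]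
    [NormedAddCommGroup T] [InnerProductSpace ℂ T] [CompleteSpace T]
    [NormedAddCommGroup T₂] [InnerProductSpace ℂ T₂] [CompleteSpace T₂]
    (k : ℕ) (P : HilbertTensorPower k H T) (Q : HilbertTensorPower 2 H T₂) :
    (∀ η : Fin k → H, (∀ i, ‖η i‖ = 1) → P.Pminus (P.tprod η) ≠ 0 →
      ‖P.Pminus (P.tprod η)‖⁻¹ • P.Pminus (P.tprod η) ∈ P.wedgeVecs) ∧
    (∀ ξ η : H, ‖ξ‖ = 1 → ‖η‖ = 1 → LinearIndependent ℂ ![ξ, η] →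
      Q.Pplus (Q.tprod ![ξ, η]) =
        (2 : ℂ)⁻¹ • (Q.tprod ![ξ, η] + Q.tprod ![η, ξ]) ∧
      Q.Pplus (Q.tprod ![ξ, η]) ≠ 0 ∧
      (¬ ∃ ζ₁ ζ₂ : H, Q.Pplus (Q.tprod ![ξ, η]) = Q.tprod ![ζ₁, ζ₂]) ∧
      ‖Q.Pplus (Q.tprod ![ξ, η])‖⁻¹ • Q.Pplus (Q.tprod ![ξ, η]) ∉ Q.symVecs) := by
  constructor
  · intro η hη hne
    have hnorm1 : ‖‖P.Pminus (P.tprod η)‖⁻¹ • P.Pminus (P.tprod η)‖ = 1 := by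
      rw [norm_smul, norm_inv, norm_norm, inv_mul_cancel₀ (norm_ne_zero_iff.mpr hne)]
    rcases Nat.eq_zero_or_pos k with hk | hk
    · subst hk
      have hP : P.Pminus (P.tprod η) = P.tprod η := by
        unfold HilbertTensorPower.Pminus
        have huniv : (Finset.univ : Finset (Equiv.Perm (Fin 0))) = {1} := by decide
        rw [huniv, Finset.sum_singleton]
        rw [ContinuousLinearMap.smul_apply, ContinuousLinearMap.smul_apply]
        rw [P.U_tprod]
        have h1 : (fun i => η ((1 : Equiv.Perm (Fin 0)) i)) = η := by
          funext i; exact i.elim0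
        rw [h1]
        simp [Nat.factorial]
      have hn : ‖P.tprod η‖ = 1 := by
        have h := P.inner_tprod η η
        rw [inner_self_eq_norm_sq_to_K] at h
        simp only [Finset.univ_eq_empty, Finset.prod_empty] at h
        have h2 : ‖P.tprod η‖ ^ 2 = 1 := by
          have h3 : ((‖P.tprod η‖ ^ 2 : ℝ) : ℂ) = ((1 : ℝ) : ℂ) := by push_cast; simpa using h
          exact_mod_cast h3
        nlinarith [norm_nonneg (P.tprod η)]
      refine ⟨η, ?_, hnorm1⟩
      unfold HilbertTensorPower.wedge
      rw [hP, hn]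
      norm_num [Nat.factorial]
    · set i0 : Fin k := ⟨0, hk⟩
      set c : ℂ := (((Real.sqrt k.factorial)⁻¹ * ‖P.Pminus (P.tprod η)‖⁻¹ : ℝ) : ℂ) with hc
      refine ⟨Function.update η i0 (c • η i0), ?_, hnorm1⟩
      unfold HilbertTensorPower.wedge
      rw [P.tprod.map_update_smul η i0 c (η i0), Function.update_eq_self, map_smul, smul_smul]
      have hsq : (0:ℝ) < Real.sqrt k.factorial :=
        Real.sqrt_pos.mpr (by exact_mod_cast k.factorial_pos)
      have hsqC : (Real.sqrt k.factorial : ℂ) ≠ 0 := by exact_mod_cast hsq.ne'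
      have hcoef : (Real.sqrt k.factorial : ℂ) * c
          = ((‖P.Pminus (P.tprod η)‖⁻¹ : ℝ) : ℂ) := by
        rw [hc]
        push_cast
        rw [← mul_assoc, mul_inv_cancel₀ hsqC, one_mul]
      rw [hcoef]
      rfl
  · intro ξ η hξ hη hli
    have ha := Q.pplus_two ξ η
    have hξξ : ⟪ξ, ξ⟫_ℂ = 1 := by rw [inner_self_eq_norm_sq_to_K, hξ]; norm_num
    have hηη : ⟪η, η⟫_ℂ = 1 := by rw [inner_self_eq_norm_sq_to_K, hη]; norm_num
    set t : ℂ := ⟪ξ, η⟫_ℂ with ht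
    have hconj : ⟪η, ξ⟫_ℂ = starRingEnd ℂ t := by rw [ht, inner_conj_symm]
    have hpne : Q.Pplus (Q.tprod ![ξ, η]) ≠ 0 := by
      intro h0
      have h1 : ⟪Q.tprod ![ξ, η], Q.Pplus (Q.tprod ![ξ, η])⟫_ℂ = 0 := by
        rw [h0, inner_zero_right]
      rw [ha, inner_smul_right, inner_add_right, Q.inner_two, Q.inner_two, hξξ, hηη, ← ht,
        hconj, Complex.mul_conj] at h1
      have h2 : ((1 + Complex.normSq t : ℝ) : ℂ) = 0 := by push_cast; linear_combination 2 * h1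
      have h3 : (1 + Complex.normSq t : ℝ) = 0 := by exact_mod_cast h2
      linarith [Complex.normSq_nonneg t]
    have hnp : ¬ ∃ ζ₁ ζ₂ : H, Q.Pplus (Q.tprod ![ξ, η]) = Q.tprod ![ζ₁, ζ₂] := by
      rintro ⟨ζ₁, ζ₂, hp⟩
      have key : ∀ u v : H, ⟪u, ξ⟫_ℂ * ⟪v, η⟫_ℂ + ⟪u, η⟫_ℂ * ⟪v, ξ⟫_ℂ
          = 2 * (⟪u, ζ₁⟫_ℂ * ⟪v, ζ₂⟫_ℂ) := by
        intro u v
        have h1 : ⟪Q.tprod ![u, v], Q.Pplus (Q.tprod ![ξ, η])⟫_ℂ = ⟪u, ζ₁⟫_ℂ * ⟪v, ζ₂⟫_ℂ := by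
          rw [hp, Q.inner_two]
        rw [ha, inner_smul_right, inner_add_right, Q.inner_two, Q.inner_two] at h1
        linear_combination 2 * h1
      set w : H := η - t • ξ with hwdef
      have hw0 : w ≠ 0 := by
        intro hw
        have h2 := (linearIndependent_fin2.mp hli).2
        have h1 : η ≠ 0 := by simpa using hli.ne_zero 1
        simp only [Matrix.cons_val_one, Matrix.head_cons, Matrix.cons_val_zero] at h2
        have hb : η = t • ξ := by rwa [hwdef, sub_eq_zero] at hw
        have htne : t ≠ 0 := by rintro h; rw [h, zero_smul] at hb; exact h1 hb
        exact h2 t⁻¹ (by rw [hb, smul_smul, inv_mul_cancel₀ htne, one_smul])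
      have hwξ : ⟪w, ξ⟫_ℂ = 0 := by
        rw [hwdef, inner_sub_left, inner_smul_left, hξξ, mul_one, hconj, sub_self]
      have hξw : ⟪ξ, w⟫_ℂ = 0 := by
        rw [hwdef, inner_sub_right, inner_smul_right, hξξ, mul_one, ← ht, sub_self]
      have hwη : ⟪w, η⟫_ℂ = ⟪w, w⟫_ℂ := by
        conv_lhs => rw [show η = w + t • ξ by rw [hwdef]; abel]
        rw [inner_add_right, inner_smul_right, hwξ, mul_zero, add_zero]
      have hs : ⟪w, w⟫_ℂ ≠ 0 := inner_self_ne_zero.mpr hw0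
      have k1 := key w w
      rw [hwξ, hwη] at k1
      have hprod : ⟪w, ζ₁⟫_ℂ * ⟪w, ζ₂⟫_ℂ = 0 := by linear_combination (-1/2 : ℂ) * k1
      have k2 := key w ξ
      rw [hwξ, hwη, hξξ] at k2
      have k3 := key ξ w
      rw [hξξ, hwη, hwξ] at k3
      rcases mul_eq_zero.mp hprod with h | h
      · rw [h] at k2; exact hs (by linear_combination k2)
      · rw [h] at k3; exact hs (by linear_combination k3)
    refine ⟨ha, hpne, hnp, ?_⟩
    rintro ⟨ζ, hζ, hvec⟩
    apply hnp
    set p := Q.Pplus (Q.tprod ![ξ, η]) with hpdef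
    refine ⟨((‖p‖ : ℝ) : ℂ) • ζ, ζ, ?_⟩
    have hupd : (![((‖p‖ : ℝ) : ℂ) • ζ, ζ] : Fin 2 → H)
        = Function.update (fun _ : Fin 2 => ζ) 0 (((‖p‖ : ℝ) : ℂ) • ζ) := by
      funext i; fin_cases i <;> simp
    rw [hupd, Q.tprod.map_update_smul (fun _ => ζ) 0 _ ζ, Function.update_eq_self, ← hvec]
    show p = (‖p‖ : ℝ) • (‖p‖⁻¹ • p)
    rw [smul_smul, mul_inv_cancel₀ (norm_ne_zero_iff.mpr hpne), one_smul]
end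
end

section
/- Let H be a complex Hilbert space, k ∈ ℕ, K^{⊗k} the norm-closed convex hull in B(H^{⊗k})_* of {ω_{ξ,η} : ξ, η ∈ V^{⊗k}}, and ‖x‖_{K^{⊗k}} := sup{|ψ(x)| : ψ ∈ K^{⊗k}}. Then the maps x ↦ P₊xP₊ and x ↦ P₋xP₋ on B(H^{⊗k}) are contractions for ‖·‖_{K^{⊗k}}, i.e. ‖P_±xP_±‖_{K^{⊗k}} ≤ ‖x‖_{K^{⊗k}} for all x ∈ B(H^{⊗k}). -/
noncomputable section

open scoped InnerProductSpace ENNReal Pointwise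

namespace Stmt14Aux

open ContinuousLinearMap

variable {k : ℕ} {H T : Type*} [NormedAddCommGroup H] [InnerProductSpace ℂ H]
  [NormedAddCommGroup T] [InnerProductSpace ℂ T]

lemma norm_tprod_of_unit (P : HilbertTensorPower k H T) {a : Fin k → H}
    (ha : ∀ i, ‖a i‖ = 1) : ‖P.tprod a‖ = 1 := by
  have h : ⟪P.tprod a, P.tprod a⟫_ℂ = 1 := by
    rw [P.inner_tprod]
    refine Finset.prod_eq_one fun i _ => ?_
    rw [inner_self_eq_norm_sq_to_K, ha i]
    norm_num
  have h2 := inner_self_eq_norm_sq_to_K (𝕜 := ℂ) (x := P.tprod a)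
  rw [h] at h2
  have h3 : ‖P.tprod a‖ ^ 2 = 1 := by
    have h4 := congrArg norm h2
    simp [norm_pow, RCLike.norm_ofReal, sq_abs, abs_norm] at h4
    exact h4.symm
  nlinarith [norm_nonneg (P.tprod a)]

lemma inner_tprod_U [CompleteSpace T] (P : HilbertTensorPower k H T)
    (σ : Equiv.Perm (Fin k)) (b : Fin k → H) (z : T) :
    ⟪P.tprod b, P.U σ z⟫_ℂ = ⟪P.tprod (fun i => b (σ⁻¹ i)), z⟫_ℂ := by
  have hiso : ∀ u v : T, ⟪P.U σ u, P.U σ v⟫_ℂ = ⟪u, v⟫_ℂ := by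
    intro u v
    let f : T →ₗᵢ[ℂ] T :=
      ⟨(P.U σ).toLinearMap, fun w => by
        simpa using (P.U_isometry σ).norm_map_of_map_zero (map_zero _) w⟩
    exact f.inner_map_map u v
  have hadj : (ContinuousLinearMap.adjoint (P.U σ)) (P.tprod b)
      = P.tprod (fun i => b (σ⁻¹ i)) := by
    have hb : P.U σ (P.tprod (fun i => b (σ⁻¹ i))) = P.tprod b := by
      rw [P.U_tprod]
      congr 1
      funext i
      simp
    rw [← hb]
    refine ext_inner_right ℂ fun w => ?_
    rw [ContinuousLinearMap.adjoint_inner_left, hiso]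
  calc ⟪P.tprod b, P.U σ z⟫_ℂ
      = ⟪(ContinuousLinearMap.adjoint (P.U σ)) (P.tprod b), z⟫_ℂ :=
        (ContinuousLinearMap.adjoint_inner_left _ _ _).symm
    _ = ⟪P.tprod (fun i => b (σ⁻¹ i)), z⟫_ℂ := by rw [hadj]

lemma norm_omega_le (ξ η : T) : ‖omegaFunctional ξ η‖ ≤ ‖η‖ * ‖ξ‖ := by
  refine le_trans (ContinuousLinearMap.opNorm_comp_le _ _) ?_
  have h1 : ‖innerSL ℂ η‖ = ‖η‖ := innerSL_apply_norm ℂ η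
  have h2 : ‖ContinuousLinearMap.apply ℂ T ξ‖ ≤ ‖ξ‖ := by
    refine ContinuousLinearMap.opNorm_le_bound _ (norm_nonneg ξ) fun y => ?_
    simpa [mul_comm] using y.le_opNorm ξ
  calc ‖innerSL ℂ η‖ * ‖ContinuousLinearMap.apply ℂ T ξ‖
      ≤ ‖η‖ * ‖ξ‖ := by rw [h1]; exact mul_le_mul_of_nonneg_left h2 (norm_nonneg η)

/-- The key estimate for a general compression `Q = (1/k!) Σ c(π) U_π` with unimodular
coefficients. -/
lemma compress_le [CompleteSpace T] (P : HilbertTensorPower k H T)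
    (K : Set ((T →L[ℂ] T) →L[ℂ] ℂ))
    (hK : K = closure (convexHull ℝ
      {φ : (T →L[ℂ] T) →L[ℂ] ℂ | ∃ ξ ∈ P.prodVecs, ∃ η ∈ P.prodVecs,
        φ = omegaFunctional ξ η}))
    (c : Equiv.Perm (Fin k) → ℂ) (hc : ∀ π, ‖c π‖ = 1) (x : T →L[ℂ] T) :
    normK K ((((k.factorial : ℂ))⁻¹ • ∑ π : Equiv.Perm (Fin k), c π • P.U π) ∘L x ∘L
      (((k.factorial : ℂ))⁻¹ • ∑ π : Equiv.Perm (Fin k), c π • P.U π)) ≤ normK K x := by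
  classical
  set S : Set ((T →L[ℂ] T) →L[ℂ] ℂ) :=
    {φ : (T →L[ℂ] T) →L[ℂ] ℂ | ∃ ξ ∈ P.prodVecs, ∃ η ∈ P.prodVecs,
        φ = omegaFunctional ξ η} with hS
  set Q : T →L[ℂ] T :=
    ((k.factorial : ℂ))⁻¹ • ∑ π : Equiv.Perm (Fin k), c π • P.U π with hQdef
  set M : ℝ := normK K x with hM
  set n : ℂ := ((k.factorial : ℂ))⁻¹ with hn
  have hnnorm : ‖n‖ = ((k.factorial : ℝ))⁻¹ := by
    rw [hn, norm_inv]
    norm_num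
  have hfac0 : (0:ℝ) < (k.factorial : ℝ) := by exact_mod_cast k.factorial_pos
  -- K is contained in the unit ball
  have hSball : S ⊆ Metric.closedBall 0 1 := by
    rintro φ ⟨ξ, ⟨a, ha, rfl⟩, η, ⟨b, hb, rfl⟩, rfl⟩
    rw [Metric.mem_closedBall, dist_zero_right]
    calc ‖omegaFunctional (P.tprod a) (P.tprod b)‖
        ≤ ‖P.tprod b‖ * ‖P.tprod a‖ := norm_omega_le _ _
      _ = 1 := by rw [norm_tprod_of_unit P ha, norm_tprod_of_unit P hb, mul_one]
  have hKball : K ⊆ Metric.closedBall 0 1 := by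
    rw [hK]
    exact closure_minimal
      (convexHull_min hSball (convex_closedBall 0 1)) Metric.isClosed_closedBall
  -- the norms ‖ψ y‖ over ψ ∈ K are bounded by ‖y‖
  have hbdd : ∀ y : T →L[ℂ] T, ∀ ψ ∈ K, ‖ψ y‖ ≤ ‖y‖ := by
    intro y ψ hψ
    have h1 : ‖ψ‖ ≤ 1 := by
      have := hKball hψ
      rwa [Metric.mem_closedBall, dist_zero_right] at this
    calc ‖ψ y‖ ≤ ‖ψ‖ * ‖y‖ := ψ.le_opNorm y
      _ ≤ 1 * ‖y‖ := mul_le_mul_of_nonneg_right h1 (norm_nonneg y)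
      _ = ‖y‖ := one_mul _
  have hM0 : 0 ≤ M := by
    rw [hM]
    exact Real.sSup_nonneg (by rintro r ⟨ψ, _, rfl⟩; exact norm_nonneg _)
  -- each functional ψ ∈ K satisfies ‖ψ x‖ ≤ M
  have hmemle : ∀ ψ ∈ K, ‖ψ x‖ ≤ M := by
    intro ψ hψ
    refine le_csSup ⟨‖x‖, ?_⟩ ⟨ψ, hψ, rfl⟩
    rintro r ⟨φ, hφ, rfl⟩
    exact hbdd x φ hφ
  -- generators: vector functionals at product vectors lie in K
  have hgenK : ∀ a b : Fin k → H, (∀ i, ‖a i‖ = 1) → (∀ i, ‖b i‖ = 1) →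
      omegaFunctional (P.tprod a) (P.tprod b) ∈ K := by
    intro a b ha hb
    rw [hK]
    exact subset_closure (subset_convexHull ℝ S
      ⟨P.tprod a, ⟨a, ha, rfl⟩, P.tprod b, ⟨b, hb, rfl⟩, rfl⟩)
  -- the key generator estimate
  have hgen : ∀ φ ∈ S, ‖φ (Q ∘L x ∘L Q)‖ ≤ M := by
    rintro φ ⟨ξ, ⟨a, ha, rfl⟩, η, ⟨b, hb, rfl⟩, rfl⟩
    have hQapp : ∀ w : T, Q w = ∑ π : Equiv.Perm (Fin k), (n * c π) • P.U π w := by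
      intro w
      rw [hQdef, ContinuousLinearMap.smul_apply, ContinuousLinearMap.sum_apply,
        Finset.smul_sum]
      refine Finset.sum_congr rfl fun π _ => ?_
      rw [ContinuousLinearMap.smul_apply, smul_smul]
    have happ : (omegaFunctional (P.tprod a) (P.tprod b)) (Q ∘L x ∘L Q)
        = ⟪P.tprod b, Q (x (Q (P.tprod a)))⟫_ℂ := rfl
    -- inner vector expansion
    have hxQ : x (Q (P.tprod a)) = ∑ π : Equiv.Perm (Fin k),
        (n * c π) • x (P.tprod fun i => a (π i)) := by
      rw [hQapp, map_sum]
      refine Finset.sum_congr rfl fun π _ => ?_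
      rw [map_smul, P.U_tprod]
    have hexp : (omegaFunctional (P.tprod a) (P.tprod b)) (Q ∘L x ∘L Q)
        = ∑ σ : Equiv.Perm (Fin k), (n * c σ) *
            ∑ π : Equiv.Perm (Fin k), (n * c π) *
              ⟪P.tprod (fun i => b (σ⁻¹ i)), x (P.tprod fun i => a (π i))⟫_ℂ := by
      rw [happ, hQapp (x (Q (P.tprod a))), inner_sum]
      refine Finset.sum_congr rfl fun σ _ => ?_
      rw [inner_smul_right, inner_tprod_U P σ b, hxQ, inner_sum]
      congr 1
      refine Finset.sum_congr rfl fun π _ => ?_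
      rw [inner_smul_right]
    rw [hexp]
    -- now estimate
    have hterm : ∀ σ π : Equiv.Perm (Fin k),
        ‖⟪P.tprod (fun i => b (σ⁻¹ i)), x (P.tprod fun i => a (π i))⟫_ℂ‖ ≤ M := by
      intro σ π
      have := hmemle (omegaFunctional (P.tprod fun i => a (π i))
          (P.tprod fun i => b (σ⁻¹ i)))
        (hgenK _ _ (fun i => ha (π i)) (fun i => hb (σ⁻¹ i)))
      exact this
    have hcard : (Finset.univ : Finset (Equiv.Perm (Fin k))).card = k.factorial := by
      rw [Finset.card_univ, Fintype.card_perm, Fintype.card_fin]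
    have hinner_le : ∀ σ : Equiv.Perm (Fin k),
        ‖∑ π : Equiv.Perm (Fin k), (n * c π) *
            ⟪P.tprod (fun i => b (σ⁻¹ i)), x (P.tprod fun i => a (π i))⟫_ℂ‖ ≤ M := by
      intro σ
      calc ‖∑ π : Equiv.Perm (Fin k), (n * c π) *
              ⟪P.tprod (fun i => b (σ⁻¹ i)), x (P.tprod fun i => a (π i))⟫_ℂ‖
          ≤ ∑ π : Equiv.Perm (Fin k), ((k.factorial : ℝ))⁻¹ * M := by
            refine le_trans (norm_sum_le _ _) (Finset.sum_le_sum fun π _ => ?_)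
            rw [norm_mul, norm_mul, hnnorm, hc π, mul_one]
            exact mul_le_mul_of_nonneg_left (hterm σ π) (by positivity)
        _ = M := by
            rw [Finset.sum_const, hcard, nsmul_eq_mul, ← mul_assoc]
            rw [mul_inv_cancel₀ (ne_of_gt hfac0), one_mul]
    calc ‖∑ σ : Equiv.Perm (Fin k), (n * c σ) *
            ∑ π : Equiv.Perm (Fin k), (n * c π) *
              ⟪P.tprod (fun i => b (σ⁻¹ i)), x (P.tprod fun i => a (π i))⟫_ℂ‖
        ≤ ∑ σ : Equiv.Perm (Fin k), ((k.factorial : ℝ))⁻¹ * M := by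
          refine le_trans (norm_sum_le _ _) (Finset.sum_le_sum fun σ _ => ?_)
          rw [norm_mul, norm_mul, hnnorm, hc σ, mul_one]
          exact mul_le_mul_of_nonneg_left (hinner_le σ) (by positivity)
      _ = M := by
          rw [Finset.sum_const, hcard, nsmul_eq_mul, ← mul_assoc]
          rw [mul_inv_cancel₀ (ne_of_gt hfac0), one_mul]
  -- extend the estimate from S to K by convexity and closedness
  have hKle : ∀ ψ ∈ K, ‖ψ (Q ∘L x ∘L Q)‖ ≤ M := by
    set C : Set ((T →L[ℂ] T) →L[ℂ] ℂ) := {ψ | ‖ψ (Q ∘L x ∘L Q)‖ ≤ M} with hC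
    have hCconv : Convex ℝ C := by
      intro ψ hψ φ hφ s t hs ht hst
      have heval : (s • ψ + t • φ) (Q ∘L x ∘L Q)
          = s • ψ (Q ∘L x ∘L Q) + t • φ (Q ∘L x ∘L Q) := by
        simp
      simp only [hC, Set.mem_setOf_eq, heval]
      calc ‖s • ψ (Q ∘L x ∘L Q) + t • φ (Q ∘L x ∘L Q)‖
          ≤ ‖s • ψ (Q ∘L x ∘L Q)‖ + ‖t • φ (Q ∘L x ∘L Q)‖ := norm_add_le _ _
        _ = s * ‖ψ (Q ∘L x ∘L Q)‖ + t * ‖φ (Q ∘L x ∘L Q)‖ := by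
            rw [norm_smul, norm_smul, Real.norm_of_nonneg hs, Real.norm_of_nonneg ht]
        _ ≤ s * M + t * M := add_le_add
            (mul_le_mul_of_nonneg_left hψ hs) (mul_le_mul_of_nonneg_left hφ ht)
        _ = M := by rw [← add_mul, hst, one_mul]
    have hCclosed : IsClosed C := by
      have hcont : Continuous fun ψ : (T →L[ℂ] T) →L[ℂ] ℂ => ‖ψ (Q ∘L x ∘L Q)‖ :=
        ((ContinuousLinearMap.apply ℂ ℂ (Q ∘L x ∘L Q)).continuous).norm
      exact IsClosed.preimage hcont isClosed_Iic
    have : K ⊆ C := by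
      rw [hK]
      exact closure_minimal (convexHull_min hgen hCconv) hCclosed
    exact fun ψ hψ => this hψ
  -- conclude
  refine Real.sSup_le ?_ hM0
  rintro r ⟨ψ, hψ, rfl⟩
  exact hKle ψ hψ

end Stmt14Aux

/-- The compressions `x ↦ P₊xP₊` and `x ↦ P₋xP₋` are contractions for the
norm `‖·‖_{K^{⊗k}}` on `B(H^{⊗k})`. -/
theorem stmt14 {H T : Type*} [NormedAddCommGroup H] [InnerProductSpace ℂ H] [CompleteSpace H]
    [NormedAddCommGroup T] [InnerProductSpace ℂ T] [CompleteSpace T]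
    (k : ℕ) (P : HilbertTensorPower k H T)
    (K : Set ((T →L[ℂ] T) →L[ℂ] ℂ))
    (hK : K = closure (convexHull ℝ
      {φ : (T →L[ℂ] T) →L[ℂ] ℂ | ∃ ξ ∈ P.prodVecs, ∃ η ∈ P.prodVecs,
        φ = omegaFunctional ξ η})) :
    ∀ x : T →L[ℂ] T,
      normK K (P.Pplus ∘L x ∘L P.Pplus) ≤ normK K x ∧
      normK K (P.Pminus ∘L x ∘L P.Pminus) ≤ normK K x := by
  intro x
  constructor
  · have h := Stmt14Aux.compress_le P K hK (fun _ => (1 : ℂ)) (fun _ => norm_one) x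
    have hPp : P.Pplus
        = ((k.factorial : ℂ))⁻¹ • ∑ π : Equiv.Perm (Fin k), (1 : ℂ) • P.U π := by
      rw [HilbertTensorPower.Pplus]
      congr 1
      exact Finset.sum_congr rfl fun π _ => (one_smul ℂ _).symm
    rw [hPp]
    exact h
  · have h := Stmt14Aux.compress_le P K hK
      (fun π => (((Equiv.Perm.sign π : ℤ) : ℂ)))
      (fun π => by
        rcases Int.units_eq_one_or (Equiv.Perm.sign π) with hs | hs <;> simp [hs]) x
    rw [HilbertTensorPower.Pminus]
    exact h
end
end
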